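/- arXiv:2401.15437 — 7 statements merged into one kernel-verified Lean document; each statement's English description precedes it below -/
import Mathlib

section
/- Let n ≥ 2 and t ≥ 0 be integers. Then any two distinct matrices A, C in A(n,2) with ν(A) = ν(C) = t are incomparable in the Bruhat order; that is, the set ν^{-1}(t) of all matrices A ∈ A(n,2) with ν(A) = t is an antichain in the Bruhat order of A(n,2). -/
open Finset

/-- A matrix of zeros and ones. -/
def ZeroOne {m n : ℕ} (A : Matrix (Fin m) (Fin n) ℕ) : Prop :=
  ∀ i j, A i j = 0 ∨ A i j = 1

/-- Sum of the entries of row `i`. -/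
def rowSum {m n : ℕ} (A : Matrix (Fin m) (Fin n) ℕ) (i : Fin m) : ℕ :=
  ∑ j, A i j

/-- Sum of the entries of column `j`. -/
def colSum {m n : ℕ} (A : Matrix (Fin m) (Fin n) ℕ) (j : Fin n) : ℕ :=
  ∑ i, A i j

/-- The class `A(R,S)` of (0,1)-matrices with row sum vector `R` and
column sum vector `S`. -/
def classRS {m n : ℕ} (R : Fin m → ℕ) (S : Fin n → ℕ) :
    Set (Matrix (Fin m) (Fin n) ℕ) :=
  {A | ZeroOne A ∧ (∀ i, rowSum A i = R i) ∧ (∀ j, colSum A j = S j)}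

/-- The class `A(n,k)` of square (0,1)-matrices of order `n` with all row
and column sums equal to `k`. -/
def classA (n k : ℕ) : Set (Matrix (Fin n) (Fin n) ℕ) :=
  classRS (fun _ => k) (fun _ => k)

/-- `sigmaM A i j` is the sum of the entries of the leading submatrix of `A`
on rows `0,…,i` and columns `0,…,j` (0-based), i.e. `σ_{i+1,j+1}(A)` in
1-based notation. -/
def sigmaM {m n : ℕ} (A : Matrix (Fin m) (Fin n) ℕ) (i : Fin m) (j : Fin n) : ℕ :=
  ∑ k ∈ Finset.univ.filter (fun k : Fin m => k ≤ i),
    ∑ l ∈ Finset.univ.filter (fun l : Fin n => l ≤ j), A k l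

/-- The Bruhat order: `A ⪯_B C` iff `σ_{ij}(A) ≥ σ_{ij}(C)` for all `i, j`. -/
def brle {m n : ℕ} (A C : Matrix (Fin m) (Fin n) ℕ) : Prop :=
  ∀ i j, sigmaM C i j ≤ sigmaM A i j

/-- Incomparability in the Bruhat order. -/
def Incomp {m n : ℕ} (A C : Matrix (Fin m) (Fin n) ℕ) : Prop :=
  ¬ brle A C ∧ ¬ brle C A

/-- A set of matrices that is an antichain in the Bruhat order. -/
def IsAntichainB {m n : ℕ} (D : Set (Matrix (Fin m) (Fin n) ℕ)) : Prop :=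
  ∀ A ∈ D, ∀ C ∈ D, A ≠ C → Incomp A C

/-- The number of inversions of a (0,1)-matrix: pairs of `1` entries, one of
which is strictly to the top-right of the other (each unordered pair counted
once, via the representative whose first member is in the lower-indexed row). -/
def nu {m n : ℕ} (A : Matrix (Fin m) (Fin n) ℕ) : ℕ :=
  (Finset.univ.filter (fun p : (Fin m × Fin n) × (Fin m × Fin n) =>
      p.1.1 < p.2.1 ∧ p.2.2 < p.1.2 ∧ A p.1.1 p.1.2 = 1 ∧ A p.2.1 p.2.2 = 1)).card

/-- The conjugate of a matrix: columns in reversed (left-right flipped) order. -/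
def conjM {m n : ℕ} (A : Matrix (Fin m) (Fin n) ℕ) : Matrix (Fin m) (Fin n) ℕ :=
  Matrix.of fun i j => A i j.rev

section AuxNu

variable {n : ℕ}

/-- `σ(k-1, l)` in ℤ : strict cutoff in rows, weak in columns. -/
def zlt (X : Matrix (Fin n) (Fin n) ℕ) (k l : Fin n) : ℤ :=
  ∑ i : Fin n, ∑ j : Fin n, if i < k ∧ j ≤ l then (X i j : ℤ) else 0

/-- `σ(k, l-1)` in ℤ : weak cutoff in rows, strict in columns. -/
def zle (X : Matrix (Fin n) (Fin n) ℕ) (k l : Fin n) : ℤ :=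
  ∑ i : Fin n, ∑ j : Fin n, if i ≤ k ∧ j < l then (X i j : ℤ) else 0

lemma cast_sigmaM (X : Matrix (Fin n) (Fin n) ℕ) (k l : Fin n) :
    (sigmaM X k l : ℤ) =
      ∑ i : Fin n, ∑ j : Fin n, if i ≤ k ∧ j ≤ l then (X i j : ℤ) else 0 := by
  unfold sigmaM
  push_cast
  rw [Finset.sum_filter]
  refine Finset.sum_congr rfl fun i _ => ?_
  by_cases h : i ≤ k
  · simp only [h, if_true, true_and]
    rw [Finset.sum_filter]
  · simp [h]

lemma zlt_mono {A C : Matrix (Fin n) (Fin n) ℕ} (hb : brle A C) (k l : Fin n) :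
    zlt C k l ≤ zlt A k l := by
  rcases Nat.eq_zero_or_pos k.val with h0 | hpos
  · have hk : ∀ i : Fin n, ¬ i < k := fun i hi => by
      have := Fin.lt_def.mp hi; omega
    have hz : ∀ X : Matrix (Fin n) (Fin n) ℕ, zlt X k l = 0 := by
      intro X; unfold zlt
      refine Finset.sum_eq_zero fun i _ => Finset.sum_eq_zero fun j _ => ?_
      simp [hk i]
    rw [hz, hz]
  · have hkn : k.val - 1 < n := by omega
    set k' : Fin n := ⟨k.val - 1, hkn⟩ with hk'
    have he : ∀ X : Matrix (Fin n) (Fin n) ℕ, zlt X k l = (sigmaM X k' l : ℤ) := by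
      intro X
      rw [cast_sigmaM]
      unfold zlt
      refine Finset.sum_congr rfl fun i _ => Finset.sum_congr rfl fun j _ => ?_
      refine if_congr (and_congr_left' ?_) rfl rfl
      rw [Fin.lt_def, Fin.le_def]
      show i.val < k.val ↔ i.val ≤ k.val - 1
      omega
    rw [he, he]
    exact_mod_cast hb k' l

lemma zle_mono {A C : Matrix (Fin n) (Fin n) ℕ} (hb : brle A C) (k l : Fin n) :
    zle C k l ≤ zle A k l := by
  rcases Nat.eq_zero_or_pos l.val with h0 | hpos
  · have hl : ∀ j : Fin n, ¬ j < l := fun j hj => by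
      have := Fin.lt_def.mp hj; omega
    have hz : ∀ X : Matrix (Fin n) (Fin n) ℕ, zle X k l = 0 := by
      intro X; unfold zle
      refine Finset.sum_eq_zero fun i _ => Finset.sum_eq_zero fun j _ => ?_
      simp [hl j]
    rw [hz, hz]
  · have hln : l.val - 1 < n := by omega
    set l' : Fin n := ⟨l.val - 1, hln⟩ with hl'
    have he : ∀ X : Matrix (Fin n) (Fin n) ℕ, zle X k l = (sigmaM X k l' : ℤ) := by
      intro X
      rw [cast_sigmaM]
      unfold zle
      refine Finset.sum_congr rfl fun i _ => Finset.sum_congr rfl fun j _ => ?_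
      refine if_congr (and_congr_right' ?_) rfl rfl
      rw [Fin.lt_def, Fin.le_def]
      show j.val < l.val ↔ j.val ≤ l.val - 1
      omega
    rw [he, he]
    exact_mod_cast hb k l'

lemma nu_cast (X : Matrix (Fin n) (Fin n) ℕ) (hX : ZeroOne X) :
    (nu X : ℤ) = ∑ x : Fin n × Fin n, ∑ y : Fin n × Fin n,
      if x.1 < y.1 ∧ y.2 < x.2 then (X x.1 x.2 : ℤ) * (X y.1 y.2 : ℤ) else 0 := by
  unfold nu
  rw [Finset.card_filter]
  push_cast
  rw [Fintype.sum_prod_type]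
  refine Finset.sum_congr rfl fun x _ => Finset.sum_congr rfl fun y _ => ?_
  rcases hX x.1 x.2 with h1 | h1 <;> rcases hX y.1 y.2 with h2 | h2 <;>
    simp [h1, h2]

lemma sum_ite_compl (p : Fin n → Prop) [DecidablePred p] (f : Fin n → ℤ) :
    ∑ j, (if p j then f j else 0) = (∑ j, f j) - ∑ j, (if ¬ p j then f j else 0) := by
  rw [eq_sub_iff_add_eq, ← Finset.sum_add_distrib]
  refine Finset.sum_congr rfl fun j _ => ?_
  by_cases h : p j <;> simp [h]

lemma inner_row {A C : Matrix (Fin n) (Fin n) ℕ}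
    (hrow : ∀ i, rowSum A i = rowSum C i) (k l : Fin n) :
    (∑ x : Fin n × Fin n,
        if x.1 < k ∧ l < x.2 then ((C x.1 x.2 : ℤ) - (A x.1 x.2 : ℤ)) else 0)
      = zlt A k l - zlt C k l := by
  have hR : ∀ i : Fin n, ∑ j : Fin n, ((C i j : ℤ) - (A i j : ℤ)) = 0 := by
    intro i
    rw [Finset.sum_sub_distrib]
    have h1 : (∑ j : Fin n, (C i j : ℤ)) = (rowSum C i : ℤ) := by unfold rowSum; push_cast; rfl
    have h2 : (∑ j : Fin n, (A i j : ℤ)) = (rowSum A i : ℤ) := by unfold rowSum; push_cast; rfl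
    rw [h1, h2, hrow i]; ring
  rw [Fintype.sum_prod_type]
  have step : ∀ i : Fin n,
      (∑ j : Fin n, if i < k ∧ l < j then ((C i j : ℤ) - (A i j : ℤ)) else 0)
        = -(∑ j : Fin n, if i < k ∧ j ≤ l then ((C i j : ℤ) - (A i j : ℤ)) else 0) := by
    intro i
    by_cases h : i < k
    · simp only [h, true_and]
      rw [sum_ite_compl (fun j => l < j) (fun j => ((C i j : ℤ) - (A i j : ℤ))), hR i]
      simp only [not_lt]
      ring
    · simp [h]
  calc (∑ i : Fin n, ∑ j : Fin n, if i < k ∧ l < j then ((C i j : ℤ) - (A i j : ℤ)) else 0)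
      = ∑ i : Fin n, -(∑ j : Fin n, if i < k ∧ j ≤ l then ((C i j : ℤ) - (A i j : ℤ)) else 0) :=
        Finset.sum_congr rfl fun i _ => step i
    _ = -(∑ i : Fin n, ∑ j : Fin n, if i < k ∧ j ≤ l then ((C i j : ℤ) - (A i j : ℤ)) else 0) := by
        rw [Finset.sum_neg_distrib]
    _ = zlt A k l - zlt C k l := by
        unfold zlt
        have expand : ∀ i j : Fin n,
            (if i < k ∧ j ≤ l then ((C i j : ℤ) - (A i j : ℤ)) else 0)
              = (if i < k ∧ j ≤ l then (C i j : ℤ) else 0)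
                - (if i < k ∧ j ≤ l then (A i j : ℤ) else 0) := by
          intro i j; split_ifs <;> simp
        simp_rw [expand, Finset.sum_sub_distrib]
        ring

lemma inner_col {A C : Matrix (Fin n) (Fin n) ℕ}
    (hcol : ∀ j, colSum A j = colSum C j) (k l : Fin n) :
    (∑ y : Fin n × Fin n,
        if k < y.1 ∧ y.2 < l then ((C y.1 y.2 : ℤ) - (A y.1 y.2 : ℤ)) else 0)
      = zle A k l - zle C k l := by
  have hS : ∀ j : Fin n, ∑ i : Fin n, ((C i j : ℤ) - (A i j : ℤ)) = 0 := by
    intro j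
    rw [Finset.sum_sub_distrib]
    have h1 : (∑ i : Fin n, (C i j : ℤ)) = (colSum C j : ℤ) := by unfold colSum; push_cast; rfl
    have h2 : (∑ i : Fin n, (A i j : ℤ)) = (colSum A j : ℤ) := by unfold colSum; push_cast; rfl
    rw [h1, h2, hcol j]; ring
  rw [Fintype.sum_prod_type]
  rw [Finset.sum_comm]
  have step : ∀ j : Fin n,
      (∑ i : Fin n, if k < i ∧ j < l then ((C i j : ℤ) - (A i j : ℤ)) else 0)
        = -(∑ i : Fin n, if i ≤ k ∧ j < l then ((C i j : ℤ) - (A i j : ℤ)) else 0) := by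
    intro j
    by_cases h : j < l
    · simp only [h, and_true]
      rw [sum_ite_compl (fun i => k < i) (fun i => ((C i j : ℤ) - (A i j : ℤ))), hS j]
      simp only [not_lt]
      ring
    · simp [h]
  calc (∑ j : Fin n, ∑ i : Fin n, if k < i ∧ j < l then ((C i j : ℤ) - (A i j : ℤ)) else 0)
      = ∑ j : Fin n, -(∑ i : Fin n, if i ≤ k ∧ j < l then ((C i j : ℤ) - (A i j : ℤ)) else 0) :=
        Finset.sum_congr rfl fun j _ => step j
    _ = -(∑ j : Fin n, ∑ i : Fin n, if i ≤ k ∧ j < l then ((C i j : ℤ) - (A i j : ℤ)) else 0) := by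
        rw [Finset.sum_neg_distrib]
    _ = zle A k l - zle C k l := by
        unfold zle
        rw [Finset.sum_comm]
        have expand : ∀ j i : Fin n,
            (if i ≤ k ∧ j < l then ((C i j : ℤ) - (A i j : ℤ)) else 0)
              = (if i ≤ k ∧ j < l then (C i j : ℤ) else 0)
                - (if i ≤ k ∧ j < l then (A i j : ℤ) else 0) := by
          intro j i; split_ifs <;> simp
        simp_rw [expand, Finset.sum_sub_distrib]
        ring

lemma key {A C : Matrix (Fin n) (Fin n) ℕ} (hA : ZeroOne A) (hC : ZeroOne C)
    (hrow : ∀ i, rowSum A i = rowSum C i) (hcol : ∀ j, colSum A j = colSum C j) :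
    (nu C : ℤ) - (nu A : ℤ) =
      (∑ y : Fin n × Fin n, (A y.1 y.2 : ℤ) * (zlt A y.1 y.2 - zlt C y.1 y.2))
      + (∑ x : Fin n × Fin n, (C x.1 x.2 : ℤ) * (zle A x.1 x.2 - zle C x.1 x.2)) := by
  rw [nu_cast A hA, nu_cast C hC, ← Finset.sum_sub_distrib]
  simp_rw [← Finset.sum_sub_distrib]
  have point : ∀ x y : Fin n × Fin n,
      ((if x.1 < y.1 ∧ y.2 < x.2 then (C x.1 x.2 : ℤ) * (C y.1 y.2 : ℤ) else 0) -
       (if x.1 < y.1 ∧ y.2 < x.2 then (A x.1 x.2 : ℤ) * (A y.1 y.2 : ℤ) else 0)) =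
      (if x.1 < y.1 ∧ y.2 < x.2 then ((C x.1 x.2 : ℤ) - (A x.1 x.2 : ℤ)) else 0) * (A y.1 y.2 : ℤ)
      + (C x.1 x.2 : ℤ) * (if x.1 < y.1 ∧ y.2 < x.2 then ((C y.1 y.2 : ℤ) - (A y.1 y.2 : ℤ)) else 0) := by
    intro x y; split_ifs <;> ring
  simp_rw [point, Finset.sum_add_distrib]
  congr 1
  · rw [Finset.sum_comm]
    refine Finset.sum_congr rfl fun y _ => ?_
    rw [← Finset.sum_mul, inner_row hrow y.1 y.2, mul_comm]
  · refine Finset.sum_congr rfl fun x _ => ?_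
    rw [← Finset.mul_sum, inner_col hcol x.1 x.2]

lemma nu_strict {A C : Matrix (Fin n) (Fin n) ℕ}
    (hA : ZeroOne A) (hC : ZeroOne C)
    (hrow : ∀ i, rowSum A i = rowSum C i) (hcol : ∀ j, colSum A j = colSum C j)
    (hb : brle A C) (hne : A ≠ C) : nu A < nu C := by
  classical
  -- the first row where A and C differ
  have hex : ∃ i j, A i j ≠ C i j := by
    by_contra h
    push_neg at h
    exact hne (by ext i j; exact h i j)
  obtain ⟨i0, j0, hij0⟩ := hex
  have hrs0 : (univ.filter (fun i : Fin n => ∃ j, A i j ≠ C i j)).Nonempty :=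
    ⟨i0, by simp only [mem_filter, mem_univ, true_and]; exact ⟨j0, hij0⟩⟩
  set p := (univ.filter (fun i : Fin n => ∃ j, A i j ≠ C i j)).min' hrs0 with hpdef
  have hpmem : ∃ j, A p j ≠ C p j := by
    have := Finset.min'_mem _ hrs0
    rw [Finset.mem_filter] at this
    exact this.2
  have hpmin : ∀ i, i < p → ∀ j, A i j = C i j := by
    intro i hi j
    by_contra h
    have hmem : i ∈ univ.filter (fun i : Fin n => ∃ j, A i j ≠ C i j) := by
      simp only [mem_filter, mem_univ, true_and]; exact ⟨j, h⟩
    exact absurd (Finset.min'_le _ i hmem) (not_le.mpr hi)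
  -- row-p prefix sums of A - C
  set rowD : Fin n → ℤ :=
    (fun j => ∑ j' ∈ univ.filter (fun j' : Fin n => j' ≤ j), ((A p j' : ℤ) - (C p j' : ℤ)))
    with hrowDdef
  have rsig : ∀ j, (sigmaM A p j : ℤ) - (sigmaM C p j : ℤ) = rowD j := by
    intro j
    rw [cast_sigmaM, cast_sigmaM, ← Finset.sum_sub_distrib]
    have comb : ∀ i : Fin n,
        ((∑ j' : Fin n, if i ≤ p ∧ j' ≤ j then (A i j' : ℤ) else 0) -
         (∑ j' : Fin n, if i ≤ p ∧ j' ≤ j then (C i j' : ℤ) else 0)) =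
        ∑ j' : Fin n, if i ≤ p ∧ j' ≤ j then ((A i j' : ℤ) - (C i j' : ℤ)) else 0 := by
      intro i
      rw [← Finset.sum_sub_distrib]
      exact Finset.sum_congr rfl fun j' _ => by split_ifs <;> simp
    simp_rw [comb]
    rw [Finset.sum_eq_single p]
    · rw [hrowDdef]
      simp only [le_refl, true_and]
      rw [Finset.sum_filter]
    · intro i _ hip
      refine Finset.sum_eq_zero fun j' _ => ?_
      by_cases h : i ≤ p ∧ j' ≤ j
      · have hilt : i < p := lt_of_le_of_ne h.1 hip
        simp [h, hpmin i hilt j']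
      · simp [h]
    · intro h; exact absurd (Finset.mem_univ p) h
  have hnn : ∀ j, 0 ≤ rowD j := by
    intro j
    rw [← rsig j]
    have := hb p j
    have h2 : (sigmaM C p j : ℤ) ≤ (sigmaM A p j : ℤ) := by exact_mod_cast this
    linarith
  -- the first column of row p where A and C differ
  have hcs0 : (univ.filter (fun j : Fin n => A p j ≠ C p j)).Nonempty := by
    obtain ⟨j, hj⟩ := hpmem
    exact ⟨j, by simp only [mem_filter, mem_univ, true_and]; exact hj⟩
  set q := (univ.filter (fun j : Fin n => A p j ≠ C p j)).min' hcs0 with hqdef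
  have hq : A p q ≠ C p q := by
    have := Finset.min'_mem _ hcs0
    rw [Finset.mem_filter] at this
    exact this.2
  have hqmin : ∀ j, j < q → A p j = C p j := by
    intro j hj
    by_contra h
    have hmem : j ∈ univ.filter (fun j : Fin n => A p j ≠ C p j) := by
      simp only [mem_filter, mem_univ, true_and]; exact h
    exact absurd (Finset.min'_le _ j hmem) (not_le.mpr hj)
  have hrq : rowD q = (A p q : ℤ) - (C p q : ℤ) := by
    rw [hrowDdef]
    refine Finset.sum_eq_single_of_mem q (by simp) ?_
    intro b hbmem hbq
    have hble : b ≤ q := (Finset.mem_filter.mp hbmem).2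
    have : b < q := lt_of_le_of_ne hble hbq
    simp [hqmin b this]
  have hrq1 : rowD q = 1 := by
    have h0 : 0 ≤ rowD q := hnn q
    rw [hrq] at h0 ⊢
    rcases hA p q with h1 | h1 <;> rcases hC p q with h2 | h2
    · exact absurd (h1.trans h2.symm) hq
    · exfalso; rw [h1, h2] at h0; norm_num at h0
    · rw [h1, h2]; norm_num
    · exact absurd (h1.trans h2.symm) hq
  -- the last index
  have hn0 : 0 < n := lt_of_le_of_lt (Nat.zero_le _) p.isLt
  set lastF : Fin n := ⟨n - 1, by omega⟩ with hlastdef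
  have hlast : rowD lastF = 0 := by
    have hfull : univ.filter (fun j' : Fin n => j' ≤ lastF) = univ := by
      ext x
      simp only [mem_filter, mem_univ, true_and, iff_true, Fin.le_def]
      have := x.isLt
      show x.val ≤ n - 1
      omega
    rw [hrowDdef]
    simp only
    rw [hfull, Finset.sum_sub_distrib]
    have h1 : (∑ j' : Fin n, (A p j' : ℤ)) = (rowSum A p : ℤ) := by unfold rowSum; push_cast; rfl
    have h2 : (∑ j' : Fin n, (C p j' : ℤ)) = (rowSum C p : ℤ) := by unfold rowSum; push_cast; rfl
    rw [h1, h2, hrow p]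
    ring
  have hqlast : q < lastF := by
    have hle : q ≤ lastF := by
      rw [Fin.le_def]
      show q.val ≤ n - 1
      have := q.isLt
      omega
    rcases lt_or_eq_of_le hle with h | h
    · exact h
    · exfalso
      rw [h, hlast] at hrq1
      norm_num at hrq1
  -- the first zero of rowD after q
  have hls0 : (univ.filter (fun j : Fin n => q < j ∧ rowD j = 0)).Nonempty :=
    ⟨lastF, by simp only [mem_filter, mem_univ, true_and]; exact ⟨hqlast, hlast⟩⟩
  set l := (univ.filter (fun j : Fin n => q < j ∧ rowD j = 0)).min' hls0 with hldef
  have hlmem : q < l ∧ rowD l = 0 := by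
    have := Finset.min'_mem _ hls0
    rw [Finset.mem_filter] at this
    exact this.2
  have hlmin : ∀ j, q < j → j < l → rowD j ≠ 0 := by
    intro j h1 h2 hz
    have hmem : j ∈ univ.filter (fun j : Fin n => q < j ∧ rowD j = 0) := by
      simp only [mem_filter, mem_univ, true_and]; exact ⟨h1, hz⟩
    exact absurd (Finset.min'_le _ j hmem) (not_le.mpr h2)
  have hl1 : 1 ≤ l.val := by
    have := Fin.lt_def.mp hlmem.1
    omega
  set l' : Fin n := ⟨l.val - 1, by have := l.isLt; omega⟩ with hl'def
  have hql' : q ≤ l' := by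
    rw [Fin.le_def]
    have := Fin.lt_def.mp hlmem.1
    show q.val ≤ l.val - 1
    omega
  have hl'l : l' < l := by
    rw [Fin.lt_def]
    show l.val - 1 < l.val
    omega
  have hDl' : 1 ≤ rowD l' := by
    rcases lt_or_eq_of_le hql' with hlt | heq
    · have h1 : rowD l' ≠ 0 := hlmin l' hlt hl'l
      have h2 : 0 ≤ rowD l' := hnn l'
      omega
    · rw [← heq, hrq1]
  -- C p l = 1 and the zle gap at (p, l) is at least 1
  have hfilterins : univ.filter (fun j' : Fin n => j' ≤ l)
      = insert l (univ.filter (fun j' : Fin n => j' ≤ l')) := by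
    ext x
    simp only [mem_filter, mem_univ, true_and, Finset.mem_insert, Fin.le_def, Fin.ext_iff]
    show x.val ≤ l.val ↔ x.val = l.val ∨ x.val ≤ l.val - 1
    omega
  have hstep : (A p l : ℤ) - (C p l : ℤ) = - rowD l' := by
    have hnotmem : l ∉ univ.filter (fun j' : Fin n => j' ≤ l') := by
      simp only [mem_filter, mem_univ, true_and, Fin.le_def]
      show ¬ l.val ≤ l.val - 1
      omega
    have h1 : rowD l = ((A p l : ℤ) - (C p l : ℤ)) + rowD l' := by
      rw [hrowDdef]
      simp only
      rw [hfilterins, Finset.sum_insert hnotmem]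
    have h2 := hlmem.2
    rw [h1] at h2
    linarith
  have hCpl : C p l = 1 := by
    have h2 : (A p l : ℤ) - (C p l : ℤ) ≤ -1 := by
      rw [hstep]; linarith
    rcases hC p l with h | h
    · exfalso
      rw [h] at h2
      have : (0:ℤ) ≤ (A p l : ℤ) := Nat.cast_nonneg _
      push_cast at h2
      linarith
    · exact h
  have hzle : zle A p l - zle C p l = rowD l' := by
    unfold zle
    rw [← Finset.sum_sub_distrib]
    have comb : ∀ i : Fin n,
        ((∑ j' : Fin n, if i ≤ p ∧ j' < l then (A i j' : ℤ) else 0) -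
         (∑ j' : Fin n, if i ≤ p ∧ j' < l then (C i j' : ℤ) else 0)) =
        ∑ j' : Fin n, if i ≤ p ∧ j' < l then ((A i j' : ℤ) - (C i j' : ℤ)) else 0 := by
      intro i
      rw [← Finset.sum_sub_distrib]
      exact Finset.sum_congr rfl fun j' _ => by split_ifs <;> simp
    simp_rw [comb]
    rw [Finset.sum_eq_single p]
    · simp only [le_refl, true_and]
      have hcongr : (∑ j' : Fin n, if j' < l then ((A p j' : ℤ) - (C p j' : ℤ)) else 0)
          = ∑ j' : Fin n, if j' ≤ l' then ((A p j' : ℤ) - (C p j' : ℤ)) else 0 := by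
        refine Finset.sum_congr rfl fun j' _ => if_congr ?_ rfl rfl
        rw [Fin.lt_def, Fin.le_def]
        show j'.val < l.val ↔ j'.val ≤ l.val - 1
        omega
      rw [hcongr, hrowDdef]
      simp only
      rw [Finset.sum_filter]
    · intro i _ hip
      refine Finset.sum_eq_zero fun j' _ => ?_
      by_cases h : i ≤ p ∧ j' < l
      · have hilt : i < p := lt_of_le_of_ne h.1 hip
        simp [h, hpmin i hilt j']
      · simp [h]
    · intro h; exact absurd (Finset.mem_univ p) h
  -- assemble
  have hkey := key hA hC hrow hcol
  have hS1 : 0 ≤ ∑ y : Fin n × Fin n, (A y.1 y.2 : ℤ) * (zlt A y.1 y.2 - zlt C y.1 y.2) :=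
    Finset.sum_nonneg fun y _ =>
      mul_nonneg (Nat.cast_nonneg _) (sub_nonneg.mpr (zlt_mono hb y.1 y.2))
  have hS2 : 1 ≤ ∑ x : Fin n × Fin n, (C x.1 x.2 : ℤ) * (zle A x.1 x.2 - zle C x.1 x.2) := by
    have hterm : (1:ℤ) ≤ (C (p, l).1 (p, l).2 : ℤ) *
        (zle A (p, l).1 (p, l).2 - zle C (p, l).1 (p, l).2) := by
      show (1:ℤ) ≤ (C p l : ℤ) * (zle A p l - zle C p l)
      rw [hCpl, hzle]
      push_cast
      linarith
    refine le_trans hterm ?_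
    exact Finset.single_le_sum
      (f := fun x : Fin n × Fin n => (C x.1 x.2 : ℤ) * (zle A x.1 x.2 - zle C x.1 x.2))
      (fun x _ => mul_nonneg (Nat.cast_nonneg _) (sub_nonneg.mpr (zle_mono hb x.1 x.2)))
      (Finset.mem_univ (p, l))
  have hfin : (nu A : ℤ) < (nu C : ℤ) := by linarith
  exact_mod_cast hfin

end AuxNu

/-- For integers `n ≥ 2` and `t ≥ 0`, the set of all matrices
`A ∈ A(n,2)` with `ν(A) = t` is an antichain in the Bruhat order, i.e. any
two distinct such matrices are incomparable. -/

theorem inversion_level_set_is_antichain (n t : ℕ) (hn : 2 ≤ n) :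
    IsAntichainB {A | A ∈ classA n 2 ∧ nu A = t} := by
  intro A hA C hC hne
  obtain ⟨hAm, hAt⟩ := hA
  obtain ⟨hCm, hCt⟩ := hC
  have hAm' : ZeroOne A ∧ (∀ i, rowSum A i = 2) ∧ (∀ j, colSum A j = 2) := hAm
  have hCm' : ZeroOne C ∧ (∀ i, rowSum C i = 2) ∧ (∀ j, colSum C j = 2) := hCm
  obtain ⟨hA0, hAr, hAc⟩ := hAm'
  obtain ⟨hC0, hCr, hCc⟩ := hCm'
  constructor
  · intro hb
    have := nu_strict hA0 hC0 (fun i => by rw [hAr i, hCr i])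
      (fun j => by rw [hAc j, hCc j]) hb hne
    rw [hAt, hCt] at this
    exact lt_irrefl t this
  · intro hb
    have := nu_strict hC0 hA0 (fun i => by rw [hCr i, hAr i])
      (fun j => by rw [hCc j, hAc j]) hb (Ne.symm hne)
    rw [hAt, hCt] at this
    exact lt_irrefl t this
end

section
/- Let R = (r_1,…,r_m) and S = (s_1,…,s_n) be sequences of nonnegative integers. Then for every A ∈ A(R,S), ν(A) + ν(A*) = C(r_1+⋯+r_m, 2) − Σ_{i=1}^{m} C(r_i, 2) − Σ_{j=1}^{n} C(s_j, 2), where C(a,2) denotes the binomial coefficient 'a choose 2'. -/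
open Finset

section BruhatAux

variable {m n : ℕ}

/-- The four basic quadruple sums. -/
def SA (a : Fin m → Fin n → ℤ) : ℤ :=
  ∑ i, ∑ k, ∑ j, ∑ l, if i < k ∧ l < j then a i j * a k l else 0
def SB (a : Fin m → Fin n → ℤ) : ℤ :=
  ∑ i, ∑ k, ∑ j, ∑ l, if i < k ∧ j < l then a i j * a k l else 0
def SC (a : Fin m → Fin n → ℤ) : ℤ :=
  ∑ i, ∑ k, ∑ j, ∑ l, if i < k ∧ j = l then a i j * a k l else 0
def SD (a : Fin m → Fin n → ℤ) : ℤ :=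
  ∑ i, ∑ k, ∑ j, ∑ l, if i = k ∧ j < l then a i j * a k l else 0

lemma two_mul_choose_two (k : ℕ) : ((k.choose 2 : ℤ)) * 2 = k * k - k := by
  induction k with
  | zero => simp
  | succ k ih =>
    rw [Nat.choose_succ_succ, Nat.choose_one_right]
    push_cast
    ring_nf
    ring_nf at ih
    linarith

lemma quad_comm (f : Fin m → Fin m → Fin n → Fin n → ℤ) :
    (∑ i, ∑ k, ∑ j, ∑ l, f i k j l) = ∑ i, ∑ k, ∑ j, ∑ l, f k i l j := by
  rw [Finset.sum_comm]
  exact Finset.sum_congr rfl fun i _ => Finset.sum_congr rfl fun k _ => Finset.sum_comm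

lemma nine_split (u v : Fin m) (c d : Fin n) (z : ℤ) :
    z = (if u < v ∧ c < d then z else 0) + (if u < v ∧ c = d then z else 0)
      + (if u < v ∧ d < c then z else 0) + (if u = v ∧ c < d then z else 0)
      + (if u = v ∧ c = d then z else 0) + (if u = v ∧ d < c then z else 0)
      + (if v < u ∧ c < d then z else 0) + (if v < u ∧ c = d then z else 0)
      + (if v < u ∧ d < c then z else 0) := by
  rcases lt_trichotomy u v with h|h|h <;> rcases lt_trichotomy c d with h'|h'|h' <;>
    simp [h, h', lt_asymm, lt_irrefl, ne_of_gt, ne_of_lt]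

lemma three_split {k : ℕ} (u v : Fin k) (z : ℤ) :
    z = (if u < v then z else 0) + (if u = v then z else 0) + (if v < u then z else 0) := by
  rcases lt_trichotomy u v with h|h|h <;>
    simp [h, lt_asymm, lt_irrefl, ne_of_gt, ne_of_lt]

lemma sym_helper (a : Fin m → Fin n → ℤ) (c : Fin m → Fin m → Fin n → Fin n → Prop)
    [inst : ∀ i k j l, Decidable (c i k j l)] :
    (∑ i, ∑ k, ∑ j, ∑ l, if c i k j l then a i j * a k l else 0)
      = ∑ i, ∑ k, ∑ j, ∑ l, if c k i l j then a i j * a k l else 0 := by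
  rw [quad_comm (fun i k j l => if c i k j l then a i j * a k l else 0)]
  refine Finset.sum_congr rfl fun i _ => Finset.sum_congr rfl fun k _ =>
    Finset.sum_congr rfl fun j _ => Finset.sum_congr rfl fun l _ => ?_
  simp only [mul_comm]

lemma grand (a : Fin m → Fin n → ℤ) (h01 : ∀ i j, a i j = 0 ∨ a i j = 1) :
    (∑ i, ∑ j, a i j) * (∑ i, ∑ j, a i j)
      = 2*SA a + 2*SB a + 2*SC a + 2*SD a + ∑ i, ∑ j, a i j := by
  have expand : (∑ i, ∑ j, a i j) * (∑ i, ∑ j, a i j)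
      = ∑ i, ∑ k, ∑ j, ∑ l, a i j * a k l := by
    rw [Finset.sum_mul_sum]
    exact Finset.sum_congr rfl fun i _ => Finset.sum_congr rfl fun k _ =>
      Finset.sum_mul_sum _ _ _ _
  rw [expand]
  have split : (∑ i : Fin m, ∑ k : Fin m, ∑ j : Fin n, ∑ l : Fin n, a i j * a k l)
      = (∑ i, ∑ k, ∑ j, ∑ l, if i < k ∧ j < l then a i j * a k l else 0)
      + (∑ i, ∑ k, ∑ j, ∑ l, if i < k ∧ j = l then a i j * a k l else 0)
      + (∑ i, ∑ k, ∑ j, ∑ l, if i < k ∧ l < j then a i j * a k l else 0)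
      + (∑ i, ∑ k, ∑ j, ∑ l, if i = k ∧ j < l then a i j * a k l else 0)
      + (∑ i, ∑ k, ∑ j, ∑ l, if i = k ∧ j = l then a i j * a k l else 0)
      + (∑ i, ∑ k, ∑ j, ∑ l, if i = k ∧ l < j then a i j * a k l else 0)
      + (∑ i, ∑ k, ∑ j, ∑ l, if k < i ∧ j < l then a i j * a k l else 0)
      + (∑ i, ∑ k, ∑ j, ∑ l, if k < i ∧ j = l then a i j * a k l else 0)
      + (∑ i, ∑ k, ∑ j, ∑ l, if k < i ∧ l < j then a i j * a k l else 0) := by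
    simp only [← Finset.sum_add_distrib]
    exact Finset.sum_congr rfl fun i _ => Finset.sum_congr rfl fun k _ =>
      Finset.sum_congr rfl fun j _ => Finset.sum_congr rfl fun l _ =>
        nine_split i k j l _
  rw [split]
  have h7 : (∑ i, ∑ k, ∑ j, ∑ l, if k < i ∧ j < l then a i j * a k l else 0) = SA a := by
    rw [sym_helper a (fun i k j l => k < i ∧ j < l)]; rfl
  have h9 : (∑ i, ∑ k, ∑ j, ∑ l, if k < i ∧ l < j then a i j * a k l else 0) = SB a := by
    rw [sym_helper a (fun i k j l => k < i ∧ l < j)]; rfl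
  have h8 : (∑ i, ∑ k, ∑ j, ∑ l, if k < i ∧ j = l then a i j * a k l else 0) = SC a := by
    rw [sym_helper a (fun i k j l => k < i ∧ j = l)]
    unfold SC
    refine Finset.sum_congr rfl fun i _ => Finset.sum_congr rfl fun k _ =>
      Finset.sum_congr rfl fun j _ => Finset.sum_congr rfl fun l _ => ?_
    simp [eq_comm]
  have h6 : (∑ i, ∑ k, ∑ j, ∑ l, if i = k ∧ l < j then a i j * a k l else 0) = SD a := by
    rw [sym_helper a (fun i k j l => i = k ∧ l < j)]
    unfold SD
    refine Finset.sum_congr rfl fun i _ => Finset.sum_congr rfl fun k _ =>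
      Finset.sum_congr rfl fun j _ => Finset.sum_congr rfl fun l _ => ?_
    simp [eq_comm]
  have h5 : (∑ i : Fin m, ∑ k : Fin m, ∑ j : Fin n, ∑ l : Fin n,
      if i = k ∧ j = l then a i j * a k l else 0) = ∑ i, ∑ j, a i j := by
    have e1 : (∑ i : Fin m, ∑ k : Fin m, ∑ j : Fin n, ∑ l : Fin n,
        if i = k ∧ j = l then a i j * a k l else 0) = ∑ i, ∑ j, a i j * a i j := by
      simp [ite_and, Finset.sum_ite_eq, Finset.sum_ite_eq']
    rw [e1]
    refine Finset.sum_congr rfl fun i _ => Finset.sum_congr rfl fun j _ => ?_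
    rcases h01 i j with h|h <;> simp [h]
  rw [h5, h6, h7, h8, h9]
  show SB a + SC a + SA a + SD a + _ + SD a + SA a + SC a + SB a = _
  ring

lemma SC_collapse (a : Fin m → Fin n → ℤ) :
    SC a = ∑ j, ∑ i, ∑ k, if i < k then a i j * a k j else 0 := by
  unfold SC
  have step : ∀ (i k : Fin m) (j : Fin n),
      (∑ l, if i < k ∧ j = l then a i j * a k l else 0) = if i < k then a i j * a k j else 0 := by
    intro i k j; by_cases h : i < k <;> simp [h]
  calc (∑ i, ∑ k, ∑ j, ∑ l, if i < k ∧ j = l then a i j * a k l else 0)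
      = ∑ i, ∑ k, ∑ j, if i < k then a i j * a k j else 0 :=
        Finset.sum_congr rfl fun i _ => Finset.sum_congr rfl fun k _ =>
          Finset.sum_congr rfl fun j _ => step i k j
    _ = ∑ i, ∑ j, ∑ k, (if i < k then a i j * a k j else 0) :=
        Finset.sum_congr rfl fun i _ => Finset.sum_comm
    _ = ∑ j, ∑ i, ∑ k, (if i < k then a i j * a k j else 0) := Finset.sum_comm

lemma SD_collapse (a : Fin m → Fin n → ℤ) :
    SD a = ∑ i, ∑ j, ∑ l, if j < l then a i j * a i l else 0 := by
  unfold SD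
  have step : ∀ (i k : Fin m),
      (∑ j, ∑ l, if i = k ∧ j < l then a i j * a k l else 0)
        = if i = k then (∑ j, ∑ l, if j < l then a i j * a k l else 0) else 0 := by
    intro i k; by_cases h : i = k <;> simp [h]
  calc (∑ i, ∑ k, ∑ j, ∑ l, if i = k ∧ j < l then a i j * a k l else 0)
      = ∑ i, ∑ k, if i = k then (∑ j, ∑ l, if j < l then a i j * a k l else 0) else 0 :=
        Finset.sum_congr rfl fun i _ => Finset.sum_congr rfl fun k _ => step i k
    _ = ∑ i, ∑ j, ∑ l, if j < l then a i j * a i l else 0 := by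
        refine Finset.sum_congr rfl fun i _ => ?_
        rw [Finset.sum_ite_eq univ i (fun k => ∑ j, ∑ l, if j < l then a i j * a k l else 0)]
        simp

lemma one_dim {k : ℕ} (b : Fin k → ℤ) (h01 : ∀ t, b t = 0 ∨ b t = 1) :
    (∑ t, b t) * (∑ t, b t)
      = 2 * (∑ t, ∑ u, if t < u then b t * b u else 0) + ∑ t, b t := by
  rw [Finset.sum_mul_sum]
  have split : (∑ t : Fin k, ∑ u : Fin k, b t * b u)
      = (∑ t, ∑ u, if t < u then b t * b u else 0)
      + (∑ t, ∑ u, if t = u then b t * b u else 0)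
      + (∑ t, ∑ u, if u < t then b t * b u else 0) := by
    simp only [← Finset.sum_add_distrib]
    exact Finset.sum_congr rfl fun t _ => Finset.sum_congr rfl fun u _ =>
      three_split t u _
  rw [split]
  have heq : (∑ t : Fin k, ∑ u : Fin k, if t = u then b t * b u else 0) = ∑ t, b t := by
    have e1 : (∑ t : Fin k, ∑ u : Fin k, if t = u then b t * b u else 0)
        = ∑ t, b t * b t := by simp [Finset.sum_ite_eq]
    rw [e1]
    refine Finset.sum_congr rfl fun t _ => ?_
    rcases h01 t with h|h <;> simp [h]
  have hgt : (∑ t : Fin k, ∑ u : Fin k, if u < t then b t * b u else 0)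
      = ∑ t, ∑ u, if t < u then b t * b u else 0 := by
    rw [Finset.sum_comm]
    exact Finset.sum_congr rfl fun t _ => Finset.sum_congr rfl fun u _ => by
      simp only [mul_comm]
  rw [heq, hgt]; ring

lemma ind_helper (c d : Prop) [Decidable c] [Decidable d] (x y : ℕ)
    (hx : x = 0 ∨ x = 1) (hy : y = 0 ∨ y = 1) :
    (if c ∧ d ∧ x = 1 ∧ y = 1 then (1:ℤ) else 0)
      = if c ∧ d then (x:ℤ) * y else 0 := by
  rcases hx with h|h <;> rcases hy with h'|h' <;>
    by_cases hc : c <;> by_cases hd : d <;> simp [h, h', hc, hd]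

end BruhatAux

section BruhatAux2

lemma nu_expand {m n : ℕ} (B : Matrix (Fin m) (Fin n) ℕ) (h01 : ZeroOne B) :
    (nu B : ℤ) = ∑ i, ∑ j, ∑ k, ∑ l,
      if i < k ∧ l < j then ((B i j : ℤ) * (B k l : ℤ)) else 0 := by
  rw [nu, Finset.card_filter]
  push_cast
  rw [Fintype.sum_prod_type]
  rw [show (∑ p1 : Fin m × Fin n, ∑ p2 : Fin m × Fin n,
      if p1.1 < p2.1 ∧ p2.2 < p1.2 ∧ B p1.1 p1.2 = 1 ∧ B p2.1 p2.2 = 1 then (1:ℤ) else 0)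
    = ∑ i, ∑ j, ∑ k, ∑ l,
      (if i < k ∧ l < j ∧ B i j = 1 ∧ B k l = 1 then (1:ℤ) else 0) from by
      rw [Fintype.sum_prod_type]
      exact Finset.sum_congr rfl fun i _ => Finset.sum_congr rfl fun j _ => by
        rw [Fintype.sum_prod_type]]
  refine Finset.sum_congr rfl fun i _ => Finset.sum_congr rfl fun j _ =>
    Finset.sum_congr rfl fun k _ => Finset.sum_congr rfl fun l _ => ?_
  exact ind_helper _ _ _ _ (h01 i j) (h01 k l)

lemma nu_cast_s2 {m n : ℕ} (A : Matrix (Fin m) (Fin n) ℕ) (h01 : ZeroOne A) :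
    (nu A : ℤ) = SA (fun i j => (A i j : ℤ)) := by
  rw [nu_expand A h01, SA]
  exact Finset.sum_congr rfl fun i _ => Finset.sum_comm

lemma nu_conj_cast {m n : ℕ} (A : Matrix (Fin m) (Fin n) ℕ) (h01 : ZeroOne A) :
    (nu (conjM A) : ℤ) = SB (fun i j => (A i j : ℤ)) := by
  have h01' : ZeroOne (conjM A) := fun i j => h01 i j.rev
  rw [nu_expand _ h01']
  calc (∑ i, ∑ j, ∑ k, ∑ l,
        if i < k ∧ l < j then ((conjM A i j : ℤ) * (conjM A k l : ℤ)) else 0)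
      = ∑ i : Fin m, ∑ j : Fin n, ∑ k : Fin m, ∑ l : Fin n,
        if i < k ∧ l < j then ((A i j.rev : ℤ) * (A k l.rev : ℤ)) else 0 := rfl
    _ = ∑ i : Fin m, ∑ j : Fin n, ∑ k : Fin m, ∑ l : Fin n,
        if i < k ∧ j < l then ((A i j : ℤ) * (A k l : ℤ)) else 0 := by
        refine Finset.sum_congr rfl fun i _ => ?_
        rw [← Equiv.sum_comp (Fin.revPerm (n := n))]
        refine Finset.sum_congr rfl fun j _ => Finset.sum_congr rfl fun k _ => ?_
        rw [← Equiv.sum_comp (Fin.revPerm (n := n))]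
        refine Finset.sum_congr rfl fun l _ => ?_
        simp only [Fin.revPerm_apply, Fin.rev_rev, Fin.rev_lt_rev]
    _ = SB (fun i j => (A i j : ℤ)) := by
        rw [SB]
        exact Finset.sum_congr rfl fun i _ => Finset.sum_comm

end BruhatAux2

/-- For every `A ∈ A(R,S)`,
`ν(A) + ν(A*) = C(r₁+⋯+r_m, 2) − Σᵢ C(rᵢ,2) − Σⱼ C(sⱼ,2)`. -/
theorem nu_add_nu_conj (m n : ℕ) (R : Fin m → ℕ) (S : Fin n → ℕ)
    (A : Matrix (Fin m) (Fin n) ℕ) (hA : A ∈ classRS R S) :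
    (nu A + nu (conjM A) : ℤ)
      = ((∑ i, R i).choose 2 : ℤ)
        - ∑ i, ((R i).choose 2 : ℤ) - ∑ j, ((S j).choose 2 : ℤ) := by
  obtain ⟨h01, hRow, hCol⟩ := hA
  set a : Fin m → Fin n → ℤ := fun i j => (A i j : ℤ) with ha
  have h01a : ∀ i j, a i j = 0 ∨ a i j = 1 := by
    intro i j; rcases h01 i j with h|h <;> simp [ha, h]
  have hR : ∀ i, (∑ j, a i j) = (R i : ℤ) := by
    intro i; rw [← hRow i, rowSum]; push_cast; rfl
  have hS : ∀ j, (∑ i, a i j) = (S j : ℤ) := by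
    intro j; rw [← hCol j, colSum]; push_cast; rfl
  have hN : (∑ i, ∑ j, a i j) = ∑ i, (R i : ℤ) :=
    Finset.sum_congr rfl fun i _ => hR i
  have hmain := grand a h01a
  rw [hN] at hmain
  have hcol : (∑ j, (S j : ℤ) * (S j : ℤ)) = 2 * SC a + ∑ j, (S j : ℤ) := by
    rw [SC_collapse, Finset.mul_sum, ← Finset.sum_add_distrib]
    refine Finset.sum_congr rfl fun j _ => ?_
    rw [← hS j]
    exact one_dim (fun t => a t j) (fun t => h01a t j)
  have hrow : (∑ i, (R i : ℤ) * (R i : ℤ)) = 2 * SD a + ∑ i, (R i : ℤ) := by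
    rw [SD_collapse, Finset.mul_sum, ← Finset.sum_add_distrib]
    refine Finset.sum_congr rfl fun i _ => ?_
    rw [← hR i]
    exact one_dim (fun t => a i t) (fun t => h01a i t)
  rw [nu_cast_s2 A h01, nu_conj_cast A h01]
  refine mul_right_cancel₀ (b := (2:ℤ)) two_ne_zero ?_
  have e1 : (((∑ i, R i).choose 2 : ℤ)) * 2 = (∑ i, (R i:ℤ)) * (∑ i, (R i:ℤ)) - ∑ i, (R i:ℤ) := by
    rw [two_mul_choose_two]
    push_cast
    ring
  have e2 : (∑ i, ((R i).choose 2 : ℤ)) * 2 = (∑ i, (R i:ℤ) * (R i:ℤ)) - ∑ i, (R i:ℤ) := by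
    rw [Finset.sum_mul, ← Finset.sum_sub_distrib]
    exact Finset.sum_congr rfl fun i _ => two_mul_choose_two (R i)
  have e3 : (∑ j, ((S j).choose 2 : ℤ)) * 2 = (∑ j, (S j:ℤ) * (S j:ℤ)) - ∑ j, (S j:ℤ) := by
    rw [Finset.sum_mul, ← Finset.sum_sub_distrib]
    exact Finset.sum_congr rfl fun j _ => two_mul_choose_two (S j)
  rw [sub_mul, sub_mul, e1, e2, e3]
  linarith [hmain, hcol, hrow]
end

section
/- Let n ≥ 2 be an integer and let A ∈ A(n,2) be self-conjugate, i.e., A = A*. Then n is even and ν(A) = n² − 3n/2. -/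
open Finset

/-!
Count the pairs of `1`-entries lying in two different rows, the upper one taken first. By
comparing their columns they split into inversions of `A`, inversions of `A*` (reflecting the
columns turns "up-right" into "up-left"), and pairs sharing a column. With all row and column
sums equal to `2` this reads `ν(A) + ν(A*) + n = 4·C(n,2)`, so for `A = A*` we get
`2ν(A) + 3n = 2n²`, which forces `n` to be even.
-/

section PairSum

variable {ι R : Type*} [Fintype ι] [LinearOrder ι] [CommSemiring R]

def pairSum (x : ι → R) : R :=
  ∑ i, ∑ i', if i < i' then x i * x i' else 0

theorem two_mul_pairSum_add_sum_sq (x : ι → R) :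
    2 * pairSum x + ∑ i, x i ^ 2 = (∑ i, x i) ^ 2 := by
  have hswap : (∑ i, ∑ i', if i' < i then x i * x i' else 0) = pairSum x := by
    rw [Finset.sum_comm]
    exact Finset.sum_congr rfl fun i _ => Finset.sum_congr rfl fun i' _ => by
      split_ifs <;> ring
  have hdiag : ∑ i, x i ^ 2 = ∑ i, ∑ i', if i = i' then x i * x i' else 0 := by
    simp [sq]
  rw [two_mul]
  nth_rw 2 [← hswap]
  rw [hdiag, sq, Finset.sum_mul_sum, pairSum, ← Finset.sum_add_distrib,
    ← Finset.sum_add_distrib]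
  refine Finset.sum_congr rfl fun i _ => ?_
  rw [← Finset.sum_add_distrib, ← Finset.sum_add_distrib]
  refine Finset.sum_congr rfl fun i' _ => ?_
  rcases lt_trichotomy i i' with h | rfl | h
  · simp [h, h.ne, not_lt_of_gt h]
  · simp
  · simp [h, h.ne', not_lt_of_gt h]

theorem two_mul_pairSum_add_sum_of_zeroOne {x : ι → ℕ} (hx : ∀ i, x i = 0 ∨ x i = 1) :
    2 * pairSum x + ∑ i, x i = (∑ i, x i) ^ 2 := by
  have hsq : ∀ i, x i ^ 2 = x i := fun i => by rcases hx i with h | h <;> simp [h]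
  simpa only [hsq] using two_mul_pairSum_add_sum_sq x

end PairSum

section Inversions

variable {m n : ℕ} {A : Matrix (Fin m) (Fin n) ℕ}

theorem ZeroOne.conjM (hA : ZeroOne A) : ZeroOne (conjM A) := fun i j => hA i j.rev

theorem nu_eq_sum (hA : ZeroOne A) :
    nu A = ∑ p : Fin m × Fin n, ∑ q : Fin m × Fin n,
      if p.1 < q.1 ∧ q.2 < p.2 then A p.1 p.2 * A q.1 q.2 else 0 := by
  rw [nu, Finset.card_filter, Fintype.sum_prod_type]
  refine Finset.sum_congr rfl fun p _ => Finset.sum_congr rfl fun q _ => ?_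
  rcases hA p.1 p.2 with h | h <;> rcases hA q.1 q.2 with h' | h' <;> simp [h, h']

theorem nu_conjM_eq_sum (hA : ZeroOne A) :
    nu (conjM A) = ∑ p : Fin m × Fin n, ∑ q : Fin m × Fin n,
      if p.1 < q.1 ∧ p.2 < q.2 then A p.1 p.2 * A q.1 q.2 else 0 := by
  rw [nu_eq_sum hA.conjM]
  let e : Fin m × Fin n ≃ Fin m × Fin n := (Equiv.refl _).prodCongr Fin.revPerm
  refine Fintype.sum_equiv e _ _ fun p => Fintype.sum_equiv e _ _ fun q => ?_
  simp [e, _root_.conjM, Fin.rev_lt_rev]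

theorem pairSum_rowSum_eq_sum (A : Matrix (Fin m) (Fin n) ℕ) :
    pairSum (rowSum A) = ∑ p : Fin m × Fin n, ∑ q : Fin m × Fin n,
      if p.1 < q.1 then A p.1 p.2 * A q.1 q.2 else 0 := by
  simp only [pairSum, rowSum, Finset.sum_mul_sum, Fintype.sum_prod_type]
  refine Finset.sum_congr rfl fun i _ => ?_
  rw [Finset.sum_comm]
  refine Finset.sum_congr rfl fun i' _ => ?_
  split_ifs <;> simp

theorem sum_pairSum_col_eq_sum (A : Matrix (Fin m) (Fin n) ℕ) :
    ∑ j, pairSum (fun i => A i j) = ∑ p : Fin m × Fin n, ∑ q : Fin m × Fin n,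
      if p.1 < q.1 ∧ p.2 = q.2 then A p.1 p.2 * A q.1 q.2 else 0 := by
  simp only [pairSum, Fintype.sum_prod_type]
  rw [Finset.sum_comm]
  refine Finset.sum_congr rfl fun i _ => Finset.sum_congr rfl fun j _ =>
    Finset.sum_congr rfl fun i' _ => ?_
  split_ifs with h <;> simp [h]

theorem nu_add_nu_conjM_add_sum_pairSum (hA : ZeroOne A) :
    nu A + nu (conjM A) + ∑ j, pairSum (fun i => A i j) = pairSum (rowSum A) := by
  rw [nu_eq_sum hA, nu_conjM_eq_sum hA, sum_pairSum_col_eq_sum, pairSum_rowSum_eq_sum,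
    ← Finset.sum_add_distrib, ← Finset.sum_add_distrib]
  refine Finset.sum_congr rfl fun p _ => ?_
  rw [← Finset.sum_add_distrib, ← Finset.sum_add_distrib]
  refine Finset.sum_congr rfl fun q _ => ?_
  rcases lt_trichotomy p.2 q.2 with h | h | h
  · simp [h, h.ne, not_lt_of_gt h]
  · simp [h]
  · simp [h, h.ne', not_lt_of_gt h]

end Inversions

theorem self_conjugate_even_and_nu_general (n : ℕ)
    (A : Matrix (Fin n) (Fin n) ℕ) (hA : A ∈ classA n 2)
    (hself : conjM A = A) :
    Even n ∧ nu A = n^2 - 3*n/2 := by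
  obtain ⟨h01, hrow, hcol⟩ := hA
  have hrows : 2 * pairSum (rowSum A) + 4 * n = 4 * n ^ 2 := by
    have := two_mul_pairSum_add_sum_sq (rowSum A)
    rw [show rowSum A = fun _ => 2 from funext hrow] at this ⊢
    simp only [Finset.sum_const, Finset.card_univ, Fintype.card_fin, smul_eq_mul] at this
    linarith
  have hcols : ∀ j, pairSum (fun i => A i j) = 1 := fun j => by
    have := two_mul_pairSum_add_sum_of_zeroOne (fun i => h01 i j)
    rw [show ∑ i, A i j = 2 from hcol j] at this
    omega
  have key := nu_add_nu_conjM_add_sum_pairSum h01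
  simp only [hself, hcols, Finset.sum_const, Finset.card_univ, Fintype.card_fin,
    smul_eq_mul, mul_one] at key
  have hnu : 2 * nu A + 3 * n = 2 * n ^ 2 := by omega
  exact ⟨Nat.even_iff.mpr (by omega), by omega⟩

/-- If `n ≥ 2` and `A ∈ A(n,2)` is self-conjugate (`A = A*`),
then `n` is even and `ν(A) = n² − 3n/2`. -/
theorem self_conjugate_even_and_nu (n : ℕ) (hn : 2 ≤ n)
    (A : Matrix (Fin n) (Fin n) ℕ) (hA : A ∈ classA n 2)
    (hself : conjM A = A) :
    Even n ∧ nu A = n^2 - 3*n/2 :=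
  self_conjugate_even_and_nu_general n A hA hself
end

section
/- Let n ≥ 2 be an even integer. Then the number of self-conjugate matrices in A(n,2), i.e., matrices A ∈ A(n,2) with A = A*, equals n!/2^{n/2}. -/
open Finset

section CountAux

variable {α β : Type*} [Fintype α] [DecidableEq α] [Fintype β] [DecidableEq β]

/-- Sum of a 0/1-valued function equals the number of places where it is 1. -/
lemma sum_zero_one {ι : Type*} [Fintype ι] [DecidableEq ι] (v : ι → ℕ)
    (hv : ∀ x, v x = 0 ∨ v x = 1) :
    ∑ x, v x = (Finset.univ.filter fun x => v x = 1).card := by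
  have h1 : ∑ x, v x = ∑ x, (if v x = 1 then 1 else 0) :=
    Finset.sum_congr rfl (fun x _ => by rcases hv x with h | h <;> simp [h])
  rw [h1, ← Finset.sum_filter, Finset.sum_const, smul_eq_mul, mul_one]

/-- Permutations carrying the fibers of `g` to the fibers of `f` correspond to
families of fiberwise bijections. -/
noncomputable def permFiberEquiv (g f : α → β) :
    {σ : Equiv.Perm α // ∀ a, f (σ a) = g a} ≃
      ∀ b, ({a // g a = b} ≃ {a // f a = b}) where
  toFun σ b := Equiv.subtypeEquiv σ.1 (fun a => by rw [σ.2 a])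
  invFun F := ⟨(Equiv.sigmaFiberEquiv g).symm.trans
      ((Equiv.sigmaCongrRight F).trans (Equiv.sigmaFiberEquiv f)),
    fun a => (F (g a) ⟨a, rfl⟩).2⟩
  left_inv := fun ⟨σ, hσ⟩ => Subtype.ext (Equiv.ext fun a => rfl)
  right_inv := fun F => funext fun b => Equiv.ext fun x => by
    obtain ⟨a, ha⟩ := x; subst ha; rfl

/-- The number of functions all of whose fibers have exactly two elements,
times `2^|β|`, equals `|α|!`. -/
lemma count_two_fiber_functions (g : α → β)
    (hg : ∀ b, (Finset.univ.filter fun a => g a = b).card = 2) :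
    (Finset.univ.filter fun f : α → β =>
        ∀ b, (Finset.univ.filter fun a => f a = b).card = 2).card
      * 2 ^ Fintype.card β = Nat.factorial (Fintype.card α) := by
  classical
  set T : Finset (α → β) := Finset.univ.filter fun f : α → β =>
      ∀ b, (Finset.univ.filter fun a => f a = b).card = 2 with hT
  have hmap : ∀ σ : Equiv.Perm α, (fun a => g (σ⁻¹ a)) ∈ T := by
    intro σ
    rw [hT, Finset.mem_filter]
    refine ⟨Finset.mem_univ _, fun b => ?_⟩
    rw [← hg b]
    apply Finset.card_bij' (fun a _ => σ⁻¹ a) (fun a _ => σ a) <;>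
      intro a ha <;> simp_all
  have hfib : ∀ f ∈ T,
      (Finset.univ.filter fun σ : Equiv.Perm α => (fun a => g (σ⁻¹ a)) = f).card
        = 2 ^ Fintype.card β := by
    intro f hf
    rw [hT, Finset.mem_filter] at hf
    have hf2 := hf.2
    have e1 : {σ : Equiv.Perm α // (fun a => g (σ⁻¹ a)) = f}
        ≃ {σ : Equiv.Perm α // ∀ a, f (σ a) = g a} := by
      apply Equiv.subtypeEquivRight
      intro σ
      constructor
      · intro h a
        have := congrFun h (σ a)
        simpa using this.symm
      · intro h
        funext a
        have := h (σ⁻¹ a)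
        simpa using this.symm
    have e2 := e1.trans (permFiberEquiv g f)
    have := Fintype.card_congr e2
    rw [Fintype.card_subtype] at this
    rw [this, Fintype.card_pi]
    have hcard : ∀ b, Fintype.card ({a // g a = b} ≃ {a // f a = b}) = 2 := by
      intro b
      have hgb : Fintype.card {a // g a = b} = 2 := by
        rw [Fintype.card_subtype]; exact hg b
      have hfb : Fintype.card {a // f a = b} = 2 := by
        rw [Fintype.card_subtype]; exact hf2 b
      rw [Fintype.card_equiv (Fintype.equivOfCardEq (hgb.trans hfb.symm)), hgb]
      rfl
    rw [Finset.prod_congr rfl (fun b _ => hcard b), Finset.prod_const,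
      Finset.card_univ]
  have hsum := Finset.card_eq_sum_card_fiberwise
    (f := fun σ : Equiv.Perm α => fun a => g (σ⁻¹ a))
    (s := Finset.univ) (t := T) (fun σ _ => hmap σ)
  rw [Finset.card_univ, Fintype.card_perm] at hsum
  rw [hsum, Finset.sum_congr rfl hfib, Finset.sum_const, smul_eq_mul]

end CountAux

section PairIdx

variable {m : ℕ}

/-- The pair index of a column: columns `k` and `2m-1-k` get index `k`. -/
def pidx (m : ℕ) (j : Fin (2 * m)) : Fin m :=
  ⟨min j.val (2 * m - 1 - j.val), by have := j.isLt; omega⟩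

def loCol (k : Fin m) : Fin (2 * m) := ⟨k.val, by have := k.isLt; omega⟩

def hiCol (k : Fin m) : Fin (2 * m) := ⟨2 * m - 1 - k.val, by have := k.isLt; omega⟩

lemma pidx_rev (j : Fin (2 * m)) : pidx m j.rev = pidx m j := by
  have := j.isLt
  apply Fin.ext
  simp only [pidx, Fin.val_rev]
  omega

lemma pidx_eq_iff (j : Fin (2 * m)) (k : Fin m) :
    pidx m j = k ↔ j = loCol k ∨ j = hiCol k := by
  have hj := j.isLt; have hk := k.isLt
  simp only [Fin.ext_iff, pidx, loCol, hiCol]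
  omega

lemma pidx_lo (k : Fin m) : pidx m (loCol k) = k := by
  rw [pidx_eq_iff]; left; rfl

lemma rev_lo (k : Fin m) : (loCol k).rev = hiCol k := by
  have := k.isLt
  apply Fin.ext
  simp only [Fin.val_rev, loCol, hiCol]
  omega

lemma pidx_eq_pidx_iff (j a : Fin (2 * m)) :
    pidx m j = pidx m a ↔ j = a ∨ j = a.rev := by
  have hj := j.isLt; have ha := a.isLt
  simp only [Fin.ext_iff, pidx, Fin.val_rev]
  omega

lemma fiber_pidx_card (k : Fin m) :
    (Finset.univ.filter fun j => pidx m j = k).card = 2 := by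
  have hset : (Finset.univ.filter fun j => pidx m j = k) = {loCol k, hiCol k} := by
    ext j
    simp [pidx_eq_iff]
  rw [hset]
  rw [Finset.card_insert_of_notMem, Finset.card_singleton]
  simp only [Finset.mem_singleton]
  intro h
  have hk := k.isLt
  rw [Fin.ext_iff] at h
  simp only [loCol, hiCol] at h
  omega

end PairIdx

section SelfConjAux

variable {m : ℕ}

/-- The self-conjugate matrix associated to a choice of column-pair per row. -/
def mOf (f : Fin (2 * m) → Fin m) : Matrix (Fin (2 * m)) (Fin (2 * m)) ℕ :=
  Matrix.of fun i j => if pidx m j = f i then 1 else 0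

lemma mOf_injective : Function.Injective (mOf (m := m)) := by
  intro f f' h
  funext i
  by_contra hne
  have := congrFun (congrFun h i) (loCol (f i))
  simp only [mOf, Matrix.of_apply, pidx_lo] at this
  simp [hne] at this

lemma set_eq :
    {A : Matrix (Fin (2 * m)) (Fin (2 * m)) ℕ | A ∈ classA (2 * m) 2 ∧ conjM A = A}
      = mOf '' ((Finset.univ.filter fun f : Fin (2 * m) → Fin m =>
          ∀ k, (Finset.univ.filter fun i => f i = k).card = 2) : Set _) := by
  ext A
  constructor
  · rintro ⟨⟨hz, hrow, hcol⟩, hconj⟩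
    have hpal : ∀ i (j : Fin (2 * m)), A i (Fin.rev j) = A i j :=
      fun i j => congrFun (congrFun hconj i) j
    have key : ∀ i, ∃ a : Fin (2 * m), ∀ j, A i j = 1 ↔ (j = a ∨ j = Fin.rev a) := by
      intro i
      have hcard : (Finset.univ.filter fun j => A i j = 1).card = 2 := by
        rw [← sum_zero_one (fun j => A i j) (fun j => hz i j)]
        exact hrow i
      obtain ⟨a, b, hab, hs⟩ := Finset.card_eq_two.mp hcard
      have hmem : ∀ j, A i j = 1 ↔ j ∈ ({a, b} : Finset _) := fun j => by
        rw [← hs]; simp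
      have hb : b = Fin.rev a := by
        have h1 : A i (Fin.rev a) = 1 := by rw [hpal]; exact (hmem a).2 (by simp)
        have hne : Fin.rev a ≠ a := by
          intro h
          have := a.isLt
          rw [Fin.ext_iff, Fin.val_rev] at h
          omega
        have h2 := (hmem _).1 h1
        simp only [Finset.mem_insert, Finset.mem_singleton] at h2
        rcases h2 with h | h
        · exact absurd h hne
        · exact h.symm
      exact ⟨a, fun j => by rw [hmem j, hb]; simp⟩
    choose r hr using key
    refine ⟨fun i => pidx m (r i), ?_, ?_⟩
    · simp only [Finset.coe_filter, Set.mem_setOf_eq, Finset.mem_univ, true_and]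
      intro k
      have hrev2 : Fin.rev (hiCol k) = loCol k := by rw [← rev_lo, Fin.rev_rev]
      have hiff : ∀ i, (pidx m (r i) = k ↔ A i (loCol k) = 1) := by
        intro i
        rw [hr i (loCol k), pidx_eq_iff]
        constructor
        · rintro (h | h)
          · exact Or.inl h.symm
          · right; rw [h, hrev2]
        · rintro (h | h)
          · exact Or.inl h.symm
          · right
            rw [← Fin.rev_rev (r i), ← h, rev_lo]
      rw [Finset.filter_congr (fun i _ => hiff i)]
      rw [← sum_zero_one (fun i => A i (loCol k)) (fun i => hz i (loCol k))]
      exact hcol (loCol k)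
    · funext i j
      show (if pidx m j = pidx m (r i) then 1 else 0) = A i j
      by_cases h : j = r i ∨ j = Fin.rev (r i)
      · rw [if_pos ((pidx_eq_pidx_iff j (r i)).mpr h), ((hr i j).2 h).symm]
      · rw [if_neg (fun hc => h ((pidx_eq_pidx_iff j (r i)).mp hc))]
        rcases hz i j with h0 | h1
        · exact h0.symm
        · exact absurd ((hr i j).1 h1) h
  · rintro ⟨f, hf, rfl⟩
    simp only [Finset.coe_filter, Set.mem_setOf_eq, Finset.mem_univ, true_and] at hf
    refine ⟨⟨fun i j => ?_, fun i => ?_, fun j => ?_⟩, ?_⟩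
    · show (if pidx m j = f i then (1:ℕ) else 0) = 0 ∨ (if pidx m j = f i then (1:ℕ) else 0) = 1
      split <;> simp
    · show ∑ j, (if pidx m j = f i then (1:ℕ) else 0) = 2
      rw [← Finset.sum_filter, Finset.sum_const, smul_eq_mul, mul_one, fiber_pidx_card]
    · show ∑ i, (if pidx m j = f i then (1:ℕ) else 0) = 2
      have h1 : ∀ i, (if pidx m j = f i then (1:ℕ) else 0)
          = (if f i = pidx m j then (1:ℕ) else 0) := fun i => by simp [eq_comm]
      rw [Finset.sum_congr rfl (fun i _ => h1 i), ← Finset.sum_filter,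
        Finset.sum_const, smul_eq_mul, mul_one]
      exact hf (pidx m j)
    · funext i j
      show mOf f i (Fin.rev j) = mOf f i j
      simp only [mOf, Matrix.of_apply, pidx_rev]

end SelfConjAux

/-- For even `n ≥ 2`, the number of self-conjugate matrices in
`A(n,2)` equals `n!/2^{n/2}`. -/
theorem count_self_conjugate (n : ℕ) (hn : 2 ≤ n) (he : Even n) :
    {A | A ∈ classA n 2 ∧ conjM A = A}.ncard
      = Nat.factorial n / 2^(n/2) := by
  obtain ⟨m, rfl⟩ := he
  have h2 : m + m = 2 * m := by ring
  rw [h2]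
  have hdiv : 2 * m / 2 = m := by omega
  rw [hdiv]
  have hTcard := count_two_fiber_functions (pidx m) (fiber_pidx_card (m := m))
  rw [Fintype.card_fin, Fintype.card_fin] at hTcard
  rw [set_eq, Set.ncard_image_of_injective _ mOf_injective, Set.ncard_coe_finset]
  rw [← hTcard, Nat.mul_div_cancel _ (pow_pos two_pos m)]
  congr 1
  ext f
  simp
end

section
/- If n ≥ 2 is an even integer, then there is an antichain of size n!/2^{n/2} in the Bruhat order of A(n,2); consequently w(n,2) ≥ n!/2^{n/2}. -/
open Finset

lemma prefixSum_eq {N : ℕ} (f g : Fin N → ℕ)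
    (h : ∀ j, ∑ l ∈ Finset.univ.filter (fun l => l ≤ j), f l
            = ∑ l ∈ Finset.univ.filter (fun l => l ≤ j), g l) : f = g := by
  have key : ∀ v : ℕ, ∀ j : Fin N, j.val = v → f j = g j := by
    intro v
    induction v using Nat.strong_induction_on with
    | _ v IH =>
      intro j hj
      have hsplit : ∀ u : Fin N → ℕ,
          ∑ l ∈ Finset.univ.filter (fun l => l ≤ j), u l
            = u j + ∑ l ∈ Finset.univ.filter (fun l => l < j), u l := by
        intro u
        have hins : Finset.univ.filter (fun l => l ≤ j)
            = insert j (Finset.univ.filter (fun l => l < j)) := by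
          ext k
          simp only [Finset.mem_filter, Finset.mem_univ, true_and, Finset.mem_insert,
            Fin.le_def, Fin.lt_def]
          constructor
          · intro hk
            rcases eq_or_lt_of_le hk with h1 | h1
            · left; exact Fin.ext h1
            · right; exact h1
          · rintro (rfl | hk)
            · exact le_rfl
            · omega
        rw [hins, Finset.sum_insert (by simp)]
      have hlt : ∑ l ∈ Finset.univ.filter (fun l => l < j), f l
          = ∑ l ∈ Finset.univ.filter (fun l => l < j), g l := by
        refine Finset.sum_congr rfl fun k hk => ?_
        simp only [Finset.mem_filter, Finset.mem_univ, true_and, Fin.lt_def] at hk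
        exact IH k.val (by omega) k rfl
      have := h j
      rw [hsplit f, hsplit g, hlt] at this
      omega
  funext j
  exact key j.val j rfl

lemma sigmaM_inj {m n : ℕ} (A C : Matrix (Fin m) (Fin n) ℕ)
    (h : ∀ i j, sigmaM A i j = sigmaM C i j) : A = C := by
  have hrow : ∀ j i, (∑ l ∈ Finset.univ.filter (fun l => l ≤ j), A i l)
      = ∑ l ∈ Finset.univ.filter (fun l => l ≤ j), C i l := by
    intro j
    have := prefixSum_eq
      (fun k => ∑ l ∈ Finset.univ.filter (fun l => l ≤ j), A k l)
      (fun k => ∑ l ∈ Finset.univ.filter (fun l => l ≤ j), C k l)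
      (fun i => h i j)
    exact fun i => congrFun this i
  funext i j
  exact congrFun (prefixSum_eq (A i) (C i) (fun j => hrow j i)) j

-- row split for column-symmetric matrices
lemma rowPrefix_split {n : ℕ} (A : Matrix (Fin n) (Fin n) ℕ) (hsym : conjM A = A)
    (i : Fin n) (j1 j2 : Fin n) (hj : j1.val + j2.val + 2 = n) :
    (∑ l ∈ Finset.univ.filter (fun l => l ≤ j1), A i l)
      + (∑ l ∈ Finset.univ.filter (fun l => l ≤ j2), A i l) = rowSum A i := by
  have hAr : ∀ l : Fin n, A i l = A i l.rev := by
    intro l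
    conv_lhs => rw [← hsym]
    rfl
  have h2 : (∑ l ∈ Finset.univ.filter (fun l => l ≤ j2), A i l)
      = ∑ l ∈ Finset.univ.filter (fun l : Fin n => ¬ l ≤ j1), A i l := by
    rw [show (∑ l ∈ Finset.univ.filter (fun l => l ≤ j2), A i l)
        = ∑ l ∈ Finset.univ.filter (fun l => l ≤ j2), A i l.rev from
      Finset.sum_congr rfl (fun l _ => hAr l)]
    have himg := Finset.sum_image (s := Finset.univ.filter (fun l => l ≤ j2))
      (g := Fin.rev) (f := fun l : Fin n => A i l)
      (fun x _ y _ hxy => Fin.rev_injective hxy)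
    rw [← himg]
    congr 1
    ext l
    simp only [Finset.mem_image, Finset.mem_filter, Finset.mem_univ, true_and]
    constructor
    · rintro ⟨k, hk, rfl⟩
      have := k.is_lt
      intro hcon
      rw [Fin.le_def] at hk hcon
      rw [Fin.val_rev] at hcon
      omega
    · intro hl
      refine ⟨l.rev, ?_, Fin.rev_rev l⟩
      simp only [Fin.le_def, not_le] at hl ⊢
      rw [Fin.val_rev]
      have := l.is_lt
      omega
  rw [h2, Finset.sum_filter_add_sum_filter_not]
  rfl

lemma sigma_pair {n : ℕ} (A : Matrix (Fin n) (Fin n) ℕ) (hsym : conjM A = A)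
    (hrow : ∀ i, rowSum A i = 2) (i : Fin n) (j1 j2 : Fin n)
    (hj : j1.val + j2.val + 2 = n) :
    sigmaM A i j1 + sigmaM A i j2
      = 2 * (Finset.univ.filter (fun k : Fin n => k ≤ i)).card := by
  unfold sigmaM
  rw [← Finset.sum_add_distrib]
  rw [Finset.sum_congr rfl (fun k _ => (rowPrefix_split A hsym k j1 j2 hj).trans (hrow k))]
  rw [Finset.sum_const, smul_eq_mul, mul_comm]

lemma sigma_last {n : ℕ} (A : Matrix (Fin n) (Fin n) ℕ)
    (hrow : ∀ i, rowSum A i = 2) (i : Fin n) (j : Fin n) (hj : j.val + 1 = n) :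
    sigmaM A i j = 2 * (Finset.univ.filter (fun k : Fin n => k ≤ i)).card := by
  unfold sigmaM
  have hall : Finset.univ.filter (fun l : Fin n => l ≤ j) = Finset.univ := by
    ext l
    simp only [Finset.mem_filter, Finset.mem_univ, true_and, Fin.le_def, iff_true]
    have := l.is_lt
    omega
  rw [hall]
  rw [Finset.sum_congr rfl (fun k _ => show (∑ l, A k l) = 2 from hrow k)]
  rw [Finset.sum_const, smul_eq_mul, mul_comm]

lemma brle_eq_of_sym {n : ℕ} (A C : Matrix (Fin n) (Fin n) ℕ)
    (hA : A ∈ classA n 2) (hC : C ∈ classA n 2)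
    (hsA : conjM A = A) (hsC : conjM C = C) (hb : brle A C) : A = C := by
  obtain ⟨-, hrA, -⟩ := hA
  obtain ⟨-, hrC, -⟩ := hC
  apply sigmaM_inj
  intro i j
  by_cases hj : j.val + 1 = n
  · rw [sigma_last A hrA i j hj, sigma_last C hrC i j hj]
  · have hjlt := j.is_lt
    have hj2 : n - 2 - j.val < n := by omega
    set j2 : Fin n := ⟨n - 2 - j.val, hj2⟩ with hj2def
    have hjj : j.val + j2.val + 2 = n := by simp [hj2def]; omega
    have hpA := sigma_pair A hsA hrA i j j2 hjj
    have hpC := sigma_pair C hsC hrC i j j2 hjj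
    have h1 := hb i j
    have h2 := hb i j2
    omega

def psiM {n : ℕ} (b : Equiv.Perm (Fin n)) : Matrix (Fin n) (Fin n) ℕ :=
  Matrix.of fun i j => if b i = j ∨ b i = j.rev then 1 else 0

lemma psiM_apply {n : ℕ} (b : Equiv.Perm (Fin n)) (i j : Fin n) :
    psiM b i j = if b i = j ∨ b i = j.rev then 1 else 0 := rfl

lemma rev_swap {n : ℕ} (x y : Fin n) : x = y.rev ↔ y = x.rev := by
  constructor <;> intro h <;> simp [h, Fin.rev_rev]

lemma ne_rev {n m : ℕ} (hnm : n = m + m) (j : Fin n) : j ≠ j.rev := by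
  intro h
  have hv := congrArg Fin.val h
  rw [Fin.val_rev] at hv
  have := j.is_lt
  omega

lemma rev_lt_iff {n m : ℕ} (hnm : n = m + m) (j : Fin n) :
    j.rev.val < m ↔ ¬ j.val < m := by
  rw [Fin.val_rev]
  have := j.is_lt
  omega

lemma psiM_sym {n : ℕ} (b : Equiv.Perm (Fin n)) : conjM (psiM b) = psiM b := by
  funext i j
  show psiM b i j.rev = psiM b i j
  rw [psiM_apply, psiM_apply, Fin.rev_rev]
  exact if_congr or_comm rfl rfl

lemma psiM_cond_iff {n : ℕ} (b : Equiv.Perm (Fin n)) (i j : Fin n) :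
    (b i = j ∨ b i = j.rev) ↔ (j = b i ∨ j = (b i).rev) := by
  constructor
  · rintro (h | h)
    · exact Or.inl h.symm
    · exact Or.inr ((rev_swap (b i) j).mp h)
  · rintro (h | h)
    · exact Or.inl h.symm
    · exact Or.inr ((rev_swap j (b i)).mp h)

lemma psiM_mem {n m : ℕ} (hnm : n = m + m) (b : Equiv.Perm (Fin n)) :
    psiM b ∈ classA n 2 := by
  refine ⟨?_, ?_, ?_⟩
  · intro i j
    rw [psiM_apply]
    by_cases h : b i = j ∨ b i = j.rev
    · right; simp [h]
    · left; simp [h]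
  · intro i
    show (∑ j, psiM b i j) = 2
    have hsplit : ∀ j : Fin n, psiM b i j
        = (if j = b i then 1 else 0) + (if j = (b i).rev then 1 else 0) := by
      intro j
      rw [psiM_apply, if_congr (psiM_cond_iff b i j) rfl rfl]
      by_cases h1 : j = b i <;> by_cases h2 : j = (b i).rev
      · exact absurd (h1 ▸ h2) (ne_rev hnm (b i))
      · simp [h1, h2]; exact ne_rev hnm (b i)
      · simp [h1, h2]; exact fun h => ne_rev hnm (b i) h.symm
      · simp [h1, h2]
    rw [Finset.sum_congr rfl (fun j _ => hsplit j), Finset.sum_add_distrib,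
      Finset.sum_ite_eq' Finset.univ (b i) (fun _ => (1:ℕ)),
      Finset.sum_ite_eq' Finset.univ (b i).rev (fun _ => (1:ℕ))]
    simp
  · intro j
    show (∑ i, psiM b i j) = 2
    have hne : b.symm j ≠ b.symm j.rev := by
      intro h
      exact ne_rev hnm j (b.symm.injective h)
    have hsplit : ∀ i : Fin n, psiM b i j
        = (if i = b.symm j then 1 else 0) + (if i = b.symm j.rev then 1 else 0) := by
      intro i
      have hc : (b i = j ∨ b i = j.rev) ↔ (i = b.symm j ∨ i = b.symm j.rev) := by
        rw [Equiv.apply_eq_iff_eq_symm_apply, Equiv.apply_eq_iff_eq_symm_apply]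
      rw [psiM_apply, if_congr hc rfl rfl]
      by_cases h1 : i = b.symm j <;> by_cases h2 : i = b.symm j.rev
      · exact absurd (h1 ▸ h2) hne
      · simp [h1, h2]; exact ne_rev hnm j
      · simp [h1, h2]; exact fun h => ne_rev hnm j h.symm
      · simp [h1, h2]
    rw [Finset.sum_congr rfl (fun i _ => hsplit i), Finset.sum_add_distrib,
      Finset.sum_ite_eq' Finset.univ (b.symm j) (fun _ => (1:ℕ)),
      Finset.sum_ite_eq' Finset.univ (b.symm j.rev) (fun _ => (1:ℕ))]
    simp

lemma sum_eq_card_filter {n : ℕ} (f : Fin n → ℕ) (hf : ∀ j, f j = 0 ∨ f j = 1) :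
    (∑ j, f j) = (Finset.univ.filter (fun j => f j = 1)).card := by
  rw [Finset.card_filter]
  refine Finset.sum_congr rfl fun j _ => ?_
  rcases hf j with h | h <;> simp [h]

lemma exists_psiM {n m : ℕ} (hnm : n = m + m) (A : Matrix (Fin n) (Fin n) ℕ)
    (hA : A ∈ classA n 2) (hsym : conjM A = A) :
    ∃ b : Equiv.Perm (Fin n), psiM b = A := by
  obtain ⟨h01, hrow, hcol⟩ := hA
  have hAr : ∀ i l, A i l = A i l.rev := by
    intro i l
    conv_lhs => rw [← hsym]
    rfl
  have hcardrow : ∀ i, (Finset.univ.filter (fun l => A i l = 1)).card = 2 := by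
    intro i
    rw [← sum_eq_card_filter (A i) (h01 i)]
    exact hrow i
  have hcardcol : ∀ j, (Finset.univ.filter (fun k => A k j = 1)).card = 2 := by
    intro j
    rw [← sum_eq_card_filter (fun k => A k j) (fun k => h01 k j)]
    exact hcol j
  have hlow : ∀ i, ∃ t : Fin n, t.val < m ∧
      Finset.univ.filter (fun l => A i l = 1) = {t, t.rev} := by
    intro i
    obtain ⟨x, y, hxy, hset⟩ := Finset.card_eq_two.mp (hcardrow i)
    have hx1 : A i x = 1 := by
      have : x ∈ Finset.univ.filter (fun l => A i l = 1) := by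
        rw [hset]; simp
      simpa using this
    have hxrev : x.rev ∈ Finset.univ.filter (fun l => A i l = 1) := by
      simp only [Finset.mem_filter, Finset.mem_univ, true_and]
      rw [← hAr]; exact hx1
    have hxr : x.rev = y := by
      rw [hset] at hxrev
      simp only [Finset.mem_insert, Finset.mem_singleton] at hxrev
      rcases hxrev with h | h
      · exact absurd h.symm (ne_rev hnm x)
      · exact h
    by_cases hxm : x.val < m
    · exact ⟨x, hxm, by rw [hset, hxr]⟩
    · refine ⟨x.rev, (rev_lt_iff hnm x).mpr hxm, ?_⟩
      rw [hset, hxr.symm, Fin.rev_rev]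
      exact Finset.pair_comm x x.rev
  choose t htm hts using hlow
  have hAt : ∀ i, A i (t i) = 1 := by
    intro i
    have : t i ∈ Finset.univ.filter (fun l => A i l = 1) := by
      rw [hts i]; simp
    simpa using this
  have hSne : ∀ i : Fin n, (Finset.univ.filter (fun k => A k (t i) = 1)).Nonempty :=
    fun i => ⟨i, Finset.mem_filter.mpr ⟨Finset.mem_univ i, hAt i⟩⟩
  set mn : Fin n → Fin n := fun i =>
    (Finset.univ.filter (fun k => A k (t i) = 1)).min' (hSne i) with hmn
  set b0 : Fin n → Fin n := fun i => if i = mn i then t i else (t i).rev with hb0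
  have hb0val : ∀ i, b0 i = t i ∨ b0 i = (t i).rev := by
    intro i
    by_cases h : i = mn i
    · left; show (if i = mn i then t i else (t i).rev) = t i; rw [if_pos h]
    · right; show (if i = mn i then t i else (t i).rev) = (t i).rev; rw [if_neg h]
  have hrevhigh : ∀ i : Fin n, ¬ ((t i).rev.val < m) := by
    intro i h
    rw [rev_lt_iff hnm] at h
    exact h (htm i)
  have htrec : ∀ i i', b0 i = b0 i' → t i = t i' := by
    intro i i' he
    rcases hb0val i with h1 | h1 <;> rcases hb0val i' with h2 | h2 <;>
      rw [h1] at he <;> rw [h2] at he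
    · exact he
    · exact absurd (he ▸ htm i) (hrevhigh i')
    · exact absurd (he ▸ htm i') (hrevhigh i)
    · exact Fin.rev_injective he
  have hinj : Function.Injective b0 := by
    intro i i' he
    have htt := htrec i i' he
    have hseq : Finset.univ.filter (fun k => A k (t i) = 1)
        = Finset.univ.filter (fun k => A k (t i') = 1) := by rw [htt]
    have hmm : mn i = mn i' := by
      apply le_antisymm
      · exact Finset.min'_le _ _ (hseq ▸ Finset.min'_mem _ (hSne i'))
      · exact Finset.min'_le _ _ (hseq.symm ▸ Finset.min'_mem _ (hSne i))
    by_cases h1 : i = mn i <;> by_cases h2 : i' = mn i'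
    · rw [h1, h2, hmm]
    · exfalso
      have he' : t i = (t i').rev := by
        have e1 : b0 i = t i := by show (if i = mn i then _ else _) = _; rw [if_pos h1]
        have e2 : b0 i' = (t i').rev := by
          show (if i' = mn i' then _ else _) = _; rw [if_neg h2]
        rw [← e1, ← e2, he]
      exact (hrevhigh i') (he' ▸ htm i)
    · exfalso
      have he' : t i' = (t i).rev := by
        have e1 : b0 i' = t i' := by
          show (if i' = mn i' then _ else _) = _; rw [if_pos h2]
        have e2 : b0 i = (t i).rev := by
          show (if i = mn i then _ else _) = _; rw [if_neg h1]
        rw [← e1, ← e2, ← he]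
      exact (hrevhigh i) (he' ▸ htm i')
    · have hiS : i ∈ Finset.univ.filter (fun k => A k (t i) = 1) :=
        Finset.mem_filter.mpr ⟨Finset.mem_univ i, hAt i⟩
      have hi'S : i' ∈ Finset.univ.filter (fun k => A k (t i) = 1) :=
        Finset.mem_filter.mpr ⟨Finset.mem_univ i', by rw [htt]; exact hAt i'⟩
      have hmnS : mn i ∈ Finset.univ.filter (fun k => A k (t i) = 1) :=
        Finset.min'_mem _ (hSne i)
      obtain ⟨x, y, hxy, hSxy⟩ := Finset.card_eq_two.mp (hcardcol (t i))
      rw [hSxy] at hiS hi'S hmnS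
      simp only [Finset.mem_insert, Finset.mem_singleton] at hiS hi'S hmnS
      rcases hmnS with h3 | h3
      · have h3' : mn i' = x := by rw [← hmm]; exact h3
        have hiy : i = y := by
          rcases hiS with h4 | h4
          · exact absurd (h4.trans h3.symm) h1
          · exact h4
        have hi'y : i' = y := by
          rcases hi'S with h4 | h4
          · exact absurd (h4.trans h3'.symm) h2
          · exact h4
        rw [hiy, hi'y]
      · have h3' : mn i' = y := by rw [← hmm]; exact h3
        have hix : i = x := by
          rcases hiS with h4 | h4
          · exact h4
          · exact absurd (h4.trans h3.symm) h1
        have hi'x : i' = x := by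
          rcases hi'S with h4 | h4
          · exact h4
          · exact absurd (h4.trans h3'.symm) h2
        rw [hix, hi'x]
  refine ⟨Equiv.ofBijective b0 (Finite.injective_iff_bijective.mp hinj), ?_⟩
  funext i j
  show (if b0 i = j ∨ b0 i = j.rev then 1 else 0) = A i j
  have hset : A i j = 1 ↔ (j = t i ∨ j = (t i).rev) := by
    constructor
    · intro h
      have : j ∈ Finset.univ.filter (fun l => A i l = 1) :=
        Finset.mem_filter.mpr ⟨Finset.mem_univ j, h⟩
      rw [hts i] at this
      simpa using this
    · rintro (rfl | rfl)
      · exact hAt i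
      · rw [← hAr]; exact hAt i
  have hcond : (b0 i = j ∨ b0 i = j.rev) ↔ (j = t i ∨ j = (t i).rev) := by
    rcases hb0val i with h1 | h1 <;> rw [h1]
    · constructor
      · rintro (h | h)
        · exact Or.inl h.symm
        · exact Or.inr ((rev_swap (t i) j).mp h)
      · rintro (h | h)
        · exact Or.inl h.symm
        · exact Or.inr ((rev_swap j (t i)).mp h)
    · constructor
      · rintro (h | h)
        · exact Or.inr h.symm
        · exact Or.inl (Fin.rev_injective h).symm
      · rintro (h | h)
        · exact Or.inr (congrArg Fin.rev h).symm
        · exact Or.inl h.symm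
  rcases h01 i j with h | h
  · rw [if_neg, h]
    intro hc
    rw [hset.mpr (hcond.mp hc)] at h
    exact one_ne_zero h
  · rw [if_pos (hcond.mpr (hset.mp h)), h]

def flipFun {n m : ℕ} (hnm : n = m + m) (ε : {j : Fin n // j.val < m} → Bool) :
    Fin n → Fin n :=
  fun j => if h : j.val < m then (if ε ⟨j, h⟩ then j.rev else j)
           else (if ε ⟨j.rev, (rev_lt_iff hnm j).mpr h⟩ then j.rev else j)

lemma flipFun_invol {n m : ℕ} (hnm : n = m + m) (ε : {j : Fin n // j.val < m} → Bool) :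
    Function.Involutive (flipFun hnm ε) := by
  intro j
  unfold flipFun
  by_cases h : j.val < m
  · rw [dif_pos h]
    by_cases hε : ε ⟨j, h⟩
    · rw [if_pos hε]
      have hrev : ¬ (j.rev.val < m) := fun hc => ((rev_lt_iff hnm j).mp hc) h
      rw [dif_neg hrev]
      have hsub : (⟨j.rev.rev, (rev_lt_iff hnm j.rev).mpr hrev⟩ : {j : Fin n // j.val < m})
          = ⟨j, h⟩ := Subtype.ext (Fin.rev_rev j)
      rw [hsub, if_pos hε, Fin.rev_rev]
    · rw [if_neg hε, dif_pos h, if_neg hε]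
  · rw [dif_neg h]
    by_cases hε : ε ⟨j.rev, (rev_lt_iff hnm j).mpr h⟩
    · rw [if_pos hε]
      have hrevlow : j.rev.val < m := (rev_lt_iff hnm j).mpr h
      rw [dif_pos hrevlow, if_pos hε, Fin.rev_rev]
    · rw [if_neg hε, dif_neg h, if_neg hε]

lemma card_low {n m : ℕ} (hnm : n = m + m) :
    Fintype.card {j : Fin n // j.val < m} = m := by
  have e : {j : Fin n // j.val < m} ≃ Fin m :=
    { toFun := fun jl => ⟨jl.1.val, jl.2⟩
      invFun := fun k => ⟨⟨k.val, by omega⟩, k.isLt⟩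
      left_inv := fun jl => Subtype.ext (Fin.ext rfl)
      right_inv := fun k => rfl }
  rw [Fintype.card_congr e, Fintype.card_fin]

lemma Hcard {n m : ℕ} (hnm : n = m + m) :
    (Finset.univ.filter
      (fun g : Equiv.Perm (Fin n) => ∀ j, g j = j ∨ g j = j.rev)).card = 2 ^ m := by
  classical
  rw [← Fintype.card_subtype]
  have E : {g : Equiv.Perm (Fin n) // ∀ j, g j = j ∨ g j = j.rev}
      ≃ ({j : Fin n // j.val < m} → Bool) :=
    { toFun := fun g jl => decide (g.1 jl.1 ≠ jl.1)
      invFun := fun ε =>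
        ⟨Function.Involutive.toPerm _ (flipFun_invol hnm ε), by
          intro j
          show flipFun hnm ε j = j ∨ flipFun hnm ε j = j.rev
          unfold flipFun
          by_cases h : j.val < m
          · rw [dif_pos h]
            by_cases hε : ε ⟨j, h⟩
            · right; rw [if_pos hε]
            · left; rw [if_neg hε]
          · rw [dif_neg h]
            by_cases hε : ε ⟨j.rev, (rev_lt_iff hnm j).mpr h⟩
            · right; rw [if_pos hε]
            · left; rw [if_neg hε]⟩
      left_inv := by
        intro g
        apply Subtype.ext
        apply Equiv.ext
        intro j
        show flipFun hnm (fun jl => decide (g.1 jl.1 ≠ jl.1)) j = g.1 j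
        unfold flipFun
        by_cases h : j.val < m
        · rw [dif_pos h]
          by_cases hg : g.1 j = j
          · rw [if_neg (by simp [hg]), hg]
          · rw [if_pos (by simp [hg])]
            rcases g.2 j with h1 | h1
            · exact absurd h1 hg
            · exact h1.symm
        · rw [dif_neg h]
          by_cases hg : g.1 j.rev = j.rev
          · have : g.1 j ≠ j.rev := by
              intro hc
              exact (ne_rev hnm j) (g.1.injective (hc.trans hg.symm))
            rcases g.2 j with h1 | h1
            · rw [if_neg (by simp [hg]), h1]
            · exact absurd h1 this
          · have h1 : g.1 j.rev = j := by
              rcases g.2 j.rev with h2 | h2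
              · exact absurd h2 hg
              · rw [h2, Fin.rev_rev]
            have h2 : g.1 j = j.rev := by
              rcases g.2 j with h3 | h3
              · exact absurd (g.1.injective (h3.trans h1.symm)) (ne_rev hnm j)
              · exact h3
            rw [if_pos (by simp [hg]), h2]
      right_inv := by
        intro ε
        funext jl
        obtain ⟨j, hj⟩ := jl
        show decide (flipFun hnm ε j ≠ j) = ε ⟨j, hj⟩
        unfold flipFun
        rw [dif_pos hj]
        by_cases hε : ε ⟨j, hj⟩
        · rw [if_pos hε, hε]
          exact decide_eq_true (Ne.symm (ne_rev hnm j))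
        · rw [if_neg hε]
          simp [hε] }
  rw [Fintype.card_congr E, Fintype.card_fun, Fintype.card_bool, card_low hnm]

lemma fiber_eq {n : ℕ} (b0 : Equiv.Perm (Fin n)) :
    Finset.univ.filter (fun b : Equiv.Perm (Fin n) => psiM b = psiM b0)
      = (Finset.univ.filter
          (fun g : Equiv.Perm (Fin n) => ∀ j, g j = j ∨ g j = j.rev)).image
        (fun g => b0.trans g) := by
  ext b
  simp only [Finset.mem_filter, Finset.mem_univ, true_and, Finset.mem_image]
  constructor
  · intro hb
    have hpt : ∀ i, b i = b0 i ∨ b i = (b0 i).rev := by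
      intro i
      have h1 : psiM b i (b i) = 1 := by rw [psiM_apply, if_pos (Or.inl rfl)]
      rw [hb, psiM_apply] at h1
      by_cases hc : b0 i = b i ∨ b0 i = (b i).rev
      · rcases hc with h | h
        · exact Or.inl h.symm
        · exact Or.inr ((rev_swap (b0 i) (b i)).mp h)
      · rw [if_neg hc] at h1
        exact absurd h1 (by norm_num)
    refine ⟨b0.symm.trans b, ?_, ?_⟩
    · intro j
      have h := hpt (b0.symm j)
      rw [Equiv.apply_symm_apply] at h
      exact h
    · apply Equiv.ext
      intro i
      simp [Equiv.trans_apply]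
  · rintro ⟨g, hg, rfl⟩
    funext i j
    show (if (b0.trans g) i = j ∨ (b0.trans g) i = j.rev then (1:ℕ) else 0)
        = (if b0 i = j ∨ b0 i = j.rev then 1 else 0)
    apply if_congr _ rfl rfl
    show (g (b0 i) = j ∨ g (b0 i) = j.rev) ↔ _
    rcases hg (b0 i) with h | h
    · rw [h]
    · rw [h]
      constructor
      · rintro (h1 | h1)
        · right
          rw [← h1, Fin.rev_rev]
        · left
          exact Fin.rev_injective h1
      · rintro (h1 | h1)
        · right
          rw [← h1]
        · left
          rw [h1, Fin.rev_rev]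

/-- For even `n ≥ 2` there is an antichain of size `n!/2^{n/2}`
in the Bruhat order of `A(n,2)`; consequently `w(n,2) ≥ n!/2^{n/2}`. -/
theorem antichain_even (n : ℕ) (hn : 2 ≤ n) (he : Even n) :
    ∃ D : Set (Matrix (Fin n) (Fin n) ℕ), D ⊆ classA n 2 ∧ IsAntichainB D ∧
      D.ncard = Nat.factorial n / 2^(n/2) := by
  classical
  obtain ⟨m, hnm⟩ := he
  set Dfin : Finset (Matrix (Fin n) (Fin n) ℕ) :=
    Finset.univ.image (psiM (n := n)) with hD
  have hmemD : ∀ A ∈ Dfin, ∃ b : Equiv.Perm (Fin n), psiM b = A := by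
    intro A hA
    obtain ⟨b, -, rfl⟩ := Finset.mem_image.mp hA
    exact ⟨b, rfl⟩
  refine ⟨↑Dfin, ?_, ?_, ?_⟩
  · intro A hA
    obtain ⟨b, rfl⟩ := hmemD A (Finset.mem_coe.mp hA)
    exact psiM_mem hnm b
  · intro A hA C hC hne
    obtain ⟨b, rfl⟩ := hmemD A (Finset.mem_coe.mp hA)
    obtain ⟨c, rfl⟩ := hmemD C (Finset.mem_coe.mp hC)
    constructor
    · intro hb
      exact hne (brle_eq_of_sym _ _ (psiM_mem hnm b) (psiM_mem hnm c)
        (psiM_sym b) (psiM_sym c) hb)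
    · intro hb
      exact hne (brle_eq_of_sym _ _ (psiM_mem hnm c) (psiM_mem hnm b)
        (psiM_sym c) (psiM_sym b) hb).symm
  · rw [Set.ncard_coe_finset]
    have hcount : (Finset.univ : Finset (Equiv.Perm (Fin n))).card
        = Dfin.card * 2 ^ m := by
      rw [Finset.card_eq_sum_card_image (psiM (n := n)) Finset.univ]
      rw [show Finset.univ.image (psiM (n := n)) = Dfin from rfl]
      rw [Finset.sum_congr rfl (fun A hA => ?_), Finset.sum_const, smul_eq_mul]
      obtain ⟨b0, rfl⟩ := hmemD A hA
      rw [fiber_eq b0, Finset.card_image_of_injective _ ?_, Hcard hnm]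
      intro g g' hgg
      apply Equiv.ext
      intro x
      have := congrArg (fun e : Equiv.Perm (Fin n) => e (b0.symm x)) hgg
      simpa [Equiv.trans_apply] using this
    have hperm : (Finset.univ : Finset (Equiv.Perm (Fin n))).card = n.factorial := by
      rw [Finset.card_univ, Fintype.card_perm, Fintype.card_fin]
    have h2 : n / 2 = m := by omega
    rw [h2]
    symm
    apply Nat.div_eq_of_eq_mul_left (pow_pos (by norm_num) m)
    rw [← hperm, hcount]
end

section
/- If n ≥ 3 is an odd integer, then there is an antichain of size (n−1)!/2^{(n−3)/2} in the Bruhat order of A(n,2); consequently w(n,2) ≥ (n−1)!/2^{(n−3)/2}. -/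
open Finset

def ent {N : ℕ} (A : Matrix (Fin N) (Fin N) ℕ) (t s : ℕ) : ℕ :=
  if h : t < N ∧ s < N then A ⟨t, h.1⟩ ⟨s, h.2⟩ else 0
def SS {N : ℕ} (A : Matrix (Fin N) (Fin N) ℕ) (a b : ℕ) : ℕ :=
  ∑ t ∈ Finset.range a, ∑ s ∈ Finset.range b, ent A t s

lemma sum_ite_le {M : Type*} [AddCommMonoid M] (N v : ℕ) (hv : v < N) (g : ℕ → M) :
    ∑ t ∈ Finset.range N, (if t ≤ v then g t else 0) = ∑ t ∈ Finset.range (v+1), g t := by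
  rw [← Finset.sum_filter]
  congr 1
  ext t
  simp only [Finset.mem_filter, Finset.mem_range]
  omega

lemma key1 {N : ℕ} (g : ℕ → ℕ) (i : Fin N) :
    (∑ a ∈ Finset.univ.filter (fun a : Fin N => a ≤ i), g a.val)
      = ∑ t ∈ Finset.range (i.val+1), g t := by
  calc ∑ a ∈ Finset.univ.filter (fun a : Fin N => a ≤ i), g a.val
      = ∑ a : Fin N, (if (a:ℕ) ≤ (i:ℕ) then g a.val else 0) := by
        rw [Finset.sum_filter]
        exact Finset.sum_congr rfl fun a _ => by simp only [Fin.le_def]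
    _ = ∑ t ∈ Finset.range N, (if t ≤ (i:ℕ) then g t else 0) :=
        Fin.sum_univ_eq_sum_range (fun t => if t ≤ (i:ℕ) then g t else 0) N
    _ = ∑ t ∈ Finset.range (i.val+1), g t := sum_ite_le N i.val i.isLt g

lemma sigma_eq_SS {N : ℕ} (A : Matrix (Fin N) (Fin N) ℕ) (i j : Fin N) :
    sigmaM A i j = SS A (i.val+1) (j.val+1) := by
  unfold sigmaM SS
  have inner : ∀ a : Fin N, (∑ l ∈ Finset.univ.filter (fun l : Fin N => l ≤ j), A a l)
      = ∑ s ∈ Finset.range (j.val+1), ent A a.val s := by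
    intro a
    rw [← key1 (fun s => ent A a.val s) j]
    apply Finset.sum_congr rfl
    intro l _
    simp [ent, a.isLt, l.isLt]
  rw [Finset.sum_congr rfl (fun a _ => inner a)]
  exact key1 (fun t => ∑ s ∈ Finset.range (j.val+1), ent A t s) i

lemma SS_rec {N : ℕ} (A : Matrix (Fin N) (Fin N) ℕ) (t s : ℕ) :
    SS A (t+1) (s+1) + SS A t s = SS A t (s+1) + SS A (t+1) s + ent A t s := by
  unfold SS
  rw [Finset.sum_range_succ, Finset.sum_range_succ (fun s' => ent A t s'),
    Finset.sum_range_succ]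
  ring

lemma sigma_determines {N : ℕ} (A C : Matrix (Fin N) (Fin N) ℕ)
    (h : ∀ i j, sigmaM A i j = sigmaM C i j) : A = C := by
  have hSS : ∀ a b, a ≤ N → b ≤ N → SS A a b = SS C a b := by
    intro a b ha hb
    match a, b with
    | 0, b => simp [SS]
    | a+1, 0 => simp [SS]
    | a+1, b+1 =>
      have := h ⟨a, by omega⟩ ⟨b, by omega⟩
      rwa [sigma_eq_SS, sigma_eq_SS] at this
  ext i j
  have h1 := SS_rec A i.val j.val
  have h2 := SS_rec C i.val j.val
  have e1 := hSS (i.val+1) (j.val+1) i.isLt j.isLt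
  have e2 := hSS i.val j.val (le_of_lt i.isLt) (le_of_lt j.isLt)
  have e3 := hSS i.val (j.val+1) (le_of_lt i.isLt) j.isLt
  have e4 := hSS (i.val+1) j.val i.isLt (le_of_lt j.isLt)
  have : ent A i.val j.val = ent C i.val j.val := by omega
  simpa [ent, i.isLt, j.isLt] using this

def fTot {N : ℕ} (A : Matrix (Fin N) (Fin N) ℕ) : ℕ :=
  ∑ i, ∑ j, sigmaM A i j

lemma eq_of_brle_fTot {N : ℕ} (A C : Matrix (Fin N) (Fin N) ℕ)
    (hb : brle A C) (hf : fTot A = fTot C) : A = C := by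
  refine (sigma_determines C A ?_).symm
  have h1 : ∀ i : Fin N, ∑ j, sigmaM C i j ≤ ∑ j, sigmaM A i j := by
    intro i; exact Finset.sum_le_sum fun j _ => hb i j
  have h2 : ∀ i ∈ (univ : Finset (Fin N)), (∑ j, sigmaM C i j) = ∑ j, sigmaM A i j :=
    (Finset.sum_eq_sum_iff_of_le (fun i _ => h1 i)).1 (hf.symm)
  intro i j
  exact (Finset.sum_eq_sum_iff_of_le (fun j _ => hb i j)).1 (h2 i (mem_univ i)) j (mem_univ j)

lemma incomp_of_fTot {N : ℕ} (A C : Matrix (Fin N) (Fin N) ℕ)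
    (hf : fTot A = fTot C) (hne : A ≠ C) : Incomp A C := by
  constructor
  · intro hb; exact hne (eq_of_brle_fTot A C hb hf)
  · intro hb; exact hne (eq_of_brle_fTot C A hb hf.symm).symm

lemma sum_ind (N v : ℕ) : (∑ t ∈ Finset.range N, if v ≤ t then (1:ℕ) else 0) = N - v := by
  induction N with
  | zero => simp
  | succ n ih => rw [Finset.sum_range_succ, ih]; split <;> omega

lemma sum_fin_ind {N : ℕ} (l : Fin N) :
    (∑ j : Fin N, if l ≤ j then (1:ℕ) else 0) = N - l.val := by
  calc (∑ j : Fin N, if l ≤ j then (1:ℕ) else 0)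
      = ∑ j : Fin N, (if (l:ℕ) ≤ (j:ℕ) then (1:ℕ) else 0) :=
        Finset.sum_congr rfl fun j _ => by simp only [Fin.le_def]
    _ = ∑ t ∈ Finset.range N, (if (l:ℕ) ≤ t then (1:ℕ) else 0) :=
        Fin.sum_univ_eq_sum_range (fun t => if (l:ℕ) ≤ t then (1:ℕ) else 0) N
    _ = N - l.val := sum_ind N l.val

/-- column-collapsing lemma -/
lemma colw {N : ℕ} (g : Fin N → ℕ) :
    (∑ j : Fin N, ∑ l ∈ Finset.univ.filter (fun l : Fin N => l ≤ j), g l)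
      = ∑ l : Fin N, (N - l.val) * g l := by
  have h1 : ∀ j : Fin N, (∑ l ∈ Finset.univ.filter (fun l : Fin N => l ≤ j), g l)
      = ∑ l : Fin N, (if l ≤ j then (1:ℕ) else 0) * g l := by
    intro j
    rw [Finset.sum_filter]
    exact Finset.sum_congr rfl fun l _ => by rw [boole_mul]
  rw [Finset.sum_congr rfl fun j _ => h1 j, Finset.sum_comm]
  apply Finset.sum_congr rfl
  intro l _
  rw [← Finset.sum_mul, sum_fin_ind l]

lemma fTot_weighted {N : ℕ} (A : Matrix (Fin N) (Fin N) ℕ) :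
    fTot A = ∑ k : Fin N, (N - k.val) * ∑ l : Fin N, (N - l.val) * A k l := by
  unfold fTot
  have h1 : ∀ i : Fin N, ∑ j, sigmaM A i j
      = ∑ l : Fin N, (N - l.val) * ∑ k ∈ Finset.univ.filter (fun k : Fin N => k ≤ i), A k l := by
    intro i
    have : ∀ j : Fin N, sigmaM A i j
        = ∑ l ∈ Finset.univ.filter (fun l : Fin N => l ≤ j),
            ∑ k ∈ Finset.univ.filter (fun k : Fin N => k ≤ i), A k l := by
      intro j; unfold sigmaM; rw [Finset.sum_comm]
    rw [Finset.sum_congr rfl fun j _ => this j]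
    exact colw (fun l => ∑ k ∈ Finset.univ.filter (fun k : Fin N => k ≤ i), A k l)
  rw [Finset.sum_congr rfl fun i _ => h1 i, Finset.sum_comm]
  have h2 : ∀ l : Fin N, (∑ i : Fin N, (N - l.val) * ∑ k ∈ Finset.univ.filter (fun k : Fin N => k ≤ i), A k l)
      = (N - l.val) * ∑ k : Fin N, (N - k.val) * A k l := by
    intro l; rw [← Finset.mul_sum, colw (fun k => A k l)]
  rw [Finset.sum_congr rfl fun l _ => h2 l]
  simp only [Finset.mul_sum]
  rw [Finset.sum_comm]
  exact Finset.sum_congr rfl fun k _ => Finset.sum_congr rfl fun l _ => by ring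



/-- The subtype of columns avoiding the two distinguished columns. -/
abbrev SubT (k : ℕ) (Y : Fin (2*k+2)) : Type :=
  {c : Fin (2*k+3) // c ≠ Y.castSucc ∧ c ≠ Y.succ}

/-- Index type for the antichain construction. -/
abbrev IT (k : ℕ) : Type := Σ Y : Fin (2*k+2), (Fin (2*k+1) ↪ SubT k Y)

variable {k : ℕ}

def code1 (k : ℕ) (i : Fin (2*k+3)) : (Fin (2*k+1)) ⊕ Bool :=
  if h : i.val < k then .inl ⟨2*i.val, by omega⟩
  else if h2 : i.val = k then .inl ⟨2*k, by omega⟩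
  else if h3 : i.val = k+1 then .inr true
  else if h4 : i.val = k+2 then .inr false
  else .inl ⟨2*(2*k+2-i.val)+1, by have hi := i.isLt; omega⟩

def code2 (k : ℕ) (i : Fin (2*k+3)) : (Fin (2*k+1)) ⊕ Bool :=
  if h : i.val < k then .inl ⟨2*i.val+1, by omega⟩
  else if h2 : i.val = k then .inr true
  else if h3 : i.val = k+1 then .inr false
  else if h4 : i.val = k+2 then .inl ⟨2*k, by omega⟩
  else .inl ⟨2*(2*k+2-i.val), by have hi := i.isLt; omega⟩

def dec (a : IT k) : (Fin (2*k+1)) ⊕ Bool → Fin (2*k+3) :=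
  Sum.elim (fun t => (a.2 t).val) (fun b => bif b then a.1.succ else a.1.castSucc)

def pi1 (a : IT k) (i : Fin (2*k+3)) : Fin (2*k+3) := dec a (code1 k i)
def pi2 (a : IT k) (i : Fin (2*k+3)) : Fin (2*k+3) := dec a (code2 k i)

lemma dec_inj (a : IT k) : Function.Injective (dec a) := by
  intro u v huv
  match u, v with
  | .inl t, .inl s =>
    simp only [dec, Sum.elim_inl] at huv
    rw [a.2.injective (Subtype.val_injective huv)]
  | .inl t, .inr b =>
    exfalso
    have h1 := (a.2 t).2.1
    have h2 := (a.2 t).2.2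
    simp only [dec, Sum.elim_inl, Sum.elim_inr] at huv
    cases b <;> simp_all
  | .inr b, .inl t =>
    exfalso
    have h1 := (a.2 t).2.1
    have h2 := (a.2 t).2.2
    simp only [dec, Sum.elim_inl, Sum.elim_inr] at huv
    cases b <;> simp_all
  | .inr b, .inr c =>
    have hy : (a.1.castSucc : Fin (2*k+3)) ≠ a.1.succ := by
      simp [Fin.ext_iff]
    simp only [dec, Sum.elim_inr] at huv
    cases b <;> cases c <;> simp_all
lemma code1_inj : Function.Injective (code1 k) := by
  intro i j hij
  have hi := i.isLt; have hj := j.isLt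
  apply Fin.ext
  unfold code1 at hij
  split_ifs at hij <;>
    (try simp only [Sum.inl.injEq, Sum.inr.injEq, Fin.mk.injEq] at hij) <;>
    (try exact Sum.noConfusion hij) <;> (try exact Bool.noConfusion hij) <;> omega

lemma code2_inj : Function.Injective (code2 k) := by
  intro i j hij
  have hi := i.isLt; have hj := j.isLt
  apply Fin.ext
  unfold code2 at hij
  split_ifs at hij <;>
    (try simp only [Sum.inl.injEq, Sum.inr.injEq, Fin.mk.injEq] at hij) <;>
    (try exact Sum.noConfusion hij) <;> (try exact Bool.noConfusion hij) <;> omega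

lemma pi1_inj (a : IT k) : Function.Injective (pi1 a) :=
  (dec_inj a).comp code1_inj

lemma pi2_inj (a : IT k) : Function.Injective (pi2 a) :=
  (dec_inj a).comp code2_inj

lemma code_ne (i : Fin (2*k+3)) : code1 k i ≠ code2 k i := by
  have hi := i.isLt
  unfold code1 code2
  intro hij
  split_ifs at hij <;>
    (try simp only [Sum.inl.injEq, Sum.inr.injEq, Fin.mk.injEq] at hij) <;>
    (try exact Sum.noConfusion hij) <;> (try exact Bool.noConfusion hij) <;> omega

lemma pi_ne (a : IT k) (i : Fin (2*k+3)) : pi1 a i ≠ pi2 a i :=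
  fun h => code_ne i (dec_inj a h)

def Mat (a : IT k) : Matrix (Fin (2*k+3)) (Fin (2*k+3)) ℕ :=
  fun i j => (if pi1 a i = j then 1 else 0) + (if pi2 a i = j then 1 else 0)

/-! ### region evaluation -/

def qn (a : IT k) (t : ℕ) : ℕ :=
  if h : t < 2*k+1 then ((a.2 ⟨t, h⟩).val : Fin (2*k+3)).val else 0

lemma pi1_val_A (a : IT k) (i : Fin (2*k+3)) (h : i.val < k) :
    (pi1 a i : ℕ) = qn a (2*i.val) := by
  unfold pi1 code1
  rw [dif_pos h]
  simp [dec, qn, Nat.lt_of_lt_of_le (by omega : 2*i.val < 2*k+1) (le_refl _)]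

lemma pi2_val_A (a : IT k) (i : Fin (2*k+3)) (h : i.val < k) :
    (pi2 a i : ℕ) = qn a (2*i.val+1) := by
  unfold pi2 code2
  rw [dif_pos h]
  simp [dec, qn, (by omega : 2*i.val+1 < 2*k+1)]

lemma pi1_val_B (a : IT k) (i : Fin (2*k+3)) (h : i.val = k) :
    (pi1 a i : ℕ) = qn a (2*k) := by
  unfold pi1 code1
  rw [dif_neg (by omega), dif_pos h]
  simp [dec, qn]

lemma pi2_val_B (a : IT k) (i : Fin (2*k+3)) (h : i.val = k) :
    (pi2 a i : ℕ) = a.1.val + 1 := by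
  unfold pi2 code2
  rw [dif_neg (by omega), dif_pos h]
  simp [dec]

lemma pi1_val_C (a : IT k) (i : Fin (2*k+3)) (h : i.val = k+1) :
    (pi1 a i : ℕ) = a.1.val + 1 := by
  unfold pi1 code1
  rw [dif_neg (by omega), dif_neg (by omega), dif_pos h]
  simp [dec]

lemma pi2_val_C (a : IT k) (i : Fin (2*k+3)) (h : i.val = k+1) :
    (pi2 a i : ℕ) = a.1.val := by
  unfold pi2 code2
  rw [dif_neg (by omega), dif_neg (by omega), dif_pos h]
  simp [dec]

lemma pi1_val_D (a : IT k) (i : Fin (2*k+3)) (h : i.val = k+2) :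
    (pi1 a i : ℕ) = a.1.val := by
  unfold pi1 code1
  rw [dif_neg (by omega), dif_neg (by omega), dif_neg (by omega), dif_pos h]
  simp [dec]

lemma pi2_val_D (a : IT k) (i : Fin (2*k+3)) (h : i.val = k+2) :
    (pi2 a i : ℕ) = qn a (2*k) := by
  unfold pi2 code2
  rw [dif_neg (by omega), dif_neg (by omega), dif_neg (by omega), dif_pos h]
  simp [dec, qn]

lemma pi1_val_E (a : IT k) (i : Fin (2*k+3)) (h : k+2 < i.val) :
    (pi1 a i : ℕ) = qn a (2*(2*k+2-i.val)+1) := by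
  have hi := i.isLt
  unfold pi1 code1
  rw [dif_neg (by omega), dif_neg (by omega), dif_neg (by omega), dif_neg (by omega)]
  simp [dec, qn, (by omega : 2*(2*k+2-i.val)+1 < 2*k+1)]

lemma pi2_val_E (a : IT k) (i : Fin (2*k+3)) (h : k+2 < i.val) :
    (pi2 a i : ℕ) = qn a (2*(2*k+2-i.val)) := by
  have hi := i.isLt
  unfold pi2 code2
  rw [dif_neg (by omega), dif_neg (by omega), dif_neg (by omega), dif_neg (by omega)]
  simp [dec, qn, (by omega : 2*(2*k+2-i.val) < 2*k+1)]

/-! ### membership in A(n,2) -/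

lemma Mat_zeroOne (a : IT k) : ZeroOne (Mat a) := by
  intro i j
  unfold Mat
  split_ifs with h1 h2 h3
  · exact absurd (h1.trans h2.symm) (pi_ne a i)
  · right; rfl
  · right; rfl
  · left; rfl

lemma Mat_rowSum (a : IT k) (i : Fin (2*k+3)) : rowSum (Mat a) i = 2 := by
  unfold rowSum Mat
  rw [Finset.sum_add_distrib]
  rw [Finset.sum_ite_eq (univ : Finset (Fin (2*k+3))) (pi1 a i) (fun _ => (1:ℕ))]
  rw [Finset.sum_ite_eq (univ : Finset (Fin (2*k+3))) (pi2 a i) (fun _ => (1:ℕ))]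
  simp

lemma sum_ite_eq_one {N : ℕ} (f : Fin N → Fin N) (hf : Function.Injective f) (j : Fin N) :
    (∑ i : Fin N, if f i = j then (1:ℕ) else 0) = 1 := by
  have hbij : Function.Bijective f := (Finite.injective_iff_bijective).1 hf
  set e := Equiv.ofBijective f hbij with he
  have : ∀ i : Fin N, (if f i = j then (1:ℕ) else 0) = if i = e.symm j then (1:ℕ) else 0 := by
    intro i
    congr 1
    rw [eq_iff_iff]
    constructor
    · intro h; rw [← h]; exact (e.symm_apply_apply i).symm
    · intro h; rw [h]; exact e.apply_symm_apply j
  rw [Finset.sum_congr rfl fun i _ => this i]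
  simp

lemma Mat_colSum (a : IT k) (j : Fin (2*k+3)) : colSum (Mat a) j = 2 := by
  unfold colSum Mat
  rw [Finset.sum_add_distrib, sum_ite_eq_one _ (pi1_inj a) j, sum_ite_eq_one _ (pi2_inj a) j]

lemma Mat_mem (a : IT k) : Mat a ∈ classA (2*k+3) 2 :=
  ⟨Mat_zeroOne a, fun i => Mat_rowSum a i, fun j => Mat_colSum a j⟩

/-! ### the value of fTot -/

lemma fTot_Mat_row (a : IT k) : fTot (Mat a) =
    ∑ i : Fin (2*k+3),
      (2*k+3 - i.val) * ((2*k+3 - (pi1 a i).val) + (2*k+3 - (pi2 a i).val)) := by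
  rw [fTot_weighted]
  apply Finset.sum_congr rfl
  intro i _
  congr 1
  unfold Mat
  have h : ∀ l : Fin (2*k+3),
      (2*k+3 - l.val) * ((if pi1 a i = l then 1 else 0) + (if pi2 a i = l then 1 else 0))
      = (if pi1 a i = l then (2*k+3 - l.val) else 0) + (if pi2 a i = l then (2*k+3 - l.val) else 0) := by
    intro l
    rw [mul_add, mul_boole, mul_boole]
  rw [Finset.sum_congr rfl fun l _ => h l, Finset.sum_add_distrib,
    Finset.sum_ite_eq (univ : Finset (Fin (2*k+3))) (pi1 a i) (fun l => 2*k+3 - l.val),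
    Finset.sum_ite_eq (univ : Finset (Fin (2*k+3))) (pi2 a i) (fun l => 2*k+3 - l.val)]
  simp

/-- total version of pi1 on ℕ -/
def pp1 (a : IT k) (t : ℕ) : ℕ := if h : t < 2*k+3 then (pi1 a ⟨t, h⟩).val else 0
def pp2 (a : IT k) (t : ℕ) : ℕ := if h : t < 2*k+3 then (pi2 a ⟨t, h⟩).val else 0

/-- the ℤ-valued row contribution -/
def G (a : IT k) (t : ℕ) : ℤ :=
  ((2*k+3 : ℤ) - t) * (2*(2*k+3) - (pp1 a t : ℤ) - (pp2 a t : ℤ))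

lemma fTot_Mat_int (a : IT k) :
    (fTot (Mat a) : ℤ) = ∑ t ∈ Finset.range (2*k+3), G a t := by
  rw [fTot_Mat_row, Nat.cast_sum]
  have h : ∀ i : Fin (2*k+3),
      (((2*k+3 - i.val) * ((2*k+3 - (pi1 a i).val) + (2*k+3 - (pi2 a i).val)) : ℕ) : ℤ)
      = (fun t => G a t) i.val := by
    intro i
    have h1 : i.val ≤ 2*k+3 := le_of_lt i.isLt
    have h2 : (pi1 a i).val ≤ 2*k+3 := le_of_lt (pi1 a i).isLt
    have h3 : (pi2 a i).val ≤ 2*k+3 := le_of_lt (pi2 a i).isLt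
    show _ = G a i.val
    unfold G pp1 pp2
    rw [dif_pos i.isLt, dif_pos i.isLt]
    push_cast [Nat.cast_sub h1, Nat.cast_sub h2, Nat.cast_sub h3]
    rw [Fin.eta]
    ring
  rw [Finset.sum_congr rfl fun i _ => h i]
  exact Fin.sum_univ_eq_sum_range (fun t => G a t) (2*k+3)

/-- pairing up a sum over range (2*r) -/
lemma sum_pairs (g : ℕ → ℤ) (r : ℕ) :
    ∑ t ∈ Finset.range r, (g (2*t) + g (2*t+1)) = ∑ t ∈ Finset.range (2*r), g t := by
  induction r with
  | zero => simp
  | succ r ih =>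
    rw [Finset.sum_range_succ, ih, show 2*(r+1) = (2*r+1)+1 by ring,
      Finset.sum_range_succ, Finset.sum_range_succ]
    ring

/-- sum of the values of q -/
lemma qn_sum (a : IT k) :
    (∑ t ∈ Finset.range (2*k+1), qn a t) + (2*a.1.val + 1)
      = ∑ t ∈ Finset.range (2*k+3), t := by
  have h1 : ∑ t ∈ Finset.range (2*k+1), qn a t
      = ∑ t : Fin (2*k+1), ((a.2 t).val : Fin (2*k+3)).val := by
    rw [← Fin.sum_univ_eq_sum_range (fun t => qn a t) (2*k+1)]
    apply Finset.sum_congr rfl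
    intro t _
    unfold qn
    rw [dif_pos t.isLt, Fin.eta]
  set y0 : Fin (2*k+3) := a.1.castSucc with hy0
  set y1 : Fin (2*k+3) := a.1.succ with hy1
  have hy01 : y0 ≠ y1 := by simp [hy0, hy1, Fin.ext_iff]
  set qvF : Fin (2*k+1) → Fin (2*k+3) := fun t => (a.2 t).val with hqvF
  have hinj : Function.Injective qvF := fun s t h => a.2.injective (Subtype.val_injective h)
  have himg : Finset.image qvF univ = univ \ {y0, y1} := by
    apply Finset.eq_of_subset_of_card_le
    · intro c hc
      rw [Finset.mem_image] at hc
      obtain ⟨t, _, rfl⟩ := hc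
      rw [Finset.mem_sdiff]
      refine ⟨Finset.mem_univ _, ?_⟩
      simp only [Finset.mem_insert, Finset.mem_singleton]
      push_neg
      exact ⟨(a.2 t).2.1, (a.2 t).2.2⟩
    · rw [Finset.card_sdiff_of_subset (Finset.subset_univ _), Finset.card_image_of_injective _ hinj]
      rw [Finset.card_insert_of_notMem (by simpa using hy01), Finset.card_singleton]
      simp
  have h2 : ∑ t : Fin (2*k+1), (qvF t).val = ∑ c ∈ univ \ {y0, y1}, c.val := by
    rw [← himg, Finset.sum_image (fun s _ t _ h => hinj h)]
  have h3 : (∑ c ∈ univ \ {y0, y1}, c.val) + (∑ c ∈ ({y0, y1} : Finset (Fin (2*k+3))), c.val)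
      = ∑ c : Fin (2*k+3), c.val := Finset.sum_sdiff (Finset.subset_univ _)
  have h4 : (∑ c ∈ ({y0, y1} : Finset (Fin (2*k+3))), c.val) = 2*a.1.val + 1 := by
    rw [Finset.sum_insert (by simpa using hy01), Finset.sum_singleton]
    simp [hy0, hy1]
    omega
  have h5 : (∑ c : Fin (2*k+3), c.val) = ∑ t ∈ Finset.range (2*k+3), t :=
    Fin.sum_univ_eq_sum_range (fun t => t) (2*k+3)
  rw [h1]
  show (∑ t : Fin (2*k+1), (qvF t).val) + (2*a.1.val + 1) = _
  omega

/-! ### G evaluation per region -/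

lemma G_val_A (a : IT k) (t : ℕ) (h : t < k) :
    G a t = ((2*k+3 : ℤ) - t) * (2*(2*k+3) - (qn a (2*t) : ℤ) - (qn a (2*t+1) : ℤ)) := by
  have ht : t < 2*k+3 := by omega
  have h' : (⟨t, ht⟩ : Fin (2*k+3)).val < k := h
  unfold G pp1 pp2
  rw [dif_pos ht, dif_pos ht, pi1_val_A a ⟨t, ht⟩ h', pi2_val_A a ⟨t, ht⟩ h']

lemma G_val_B (a : IT k) :
    G a k = ((2*k+3 : ℤ) - k) * (2*(2*k+3) - (qn a (2*k) : ℤ) - ((a.1.val : ℤ)+1)) := by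
  have ht : k < 2*k+3 := by omega
  have h' : (⟨k, ht⟩ : Fin (2*k+3)).val = k := rfl
  unfold G pp1 pp2
  rw [dif_pos ht, dif_pos ht, pi1_val_B a ⟨k, ht⟩ h', pi2_val_B a ⟨k, ht⟩ h']
  push_cast
  ring

lemma G_val_C (a : IT k) :
    G a (k+1) = ((2*k+3 : ℤ) - (k+1)) * (2*(2*k+3) - ((a.1.val : ℤ)+1) - (a.1.val : ℤ)) := by
  have ht : k+1 < 2*k+3 := by omega
  have h' : (⟨k+1, ht⟩ : Fin (2*k+3)).val = k+1 := rfl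
  unfold G pp1 pp2
  rw [dif_pos ht, dif_pos ht, pi1_val_C a ⟨k+1, ht⟩ h', pi2_val_C a ⟨k+1, ht⟩ h']
  push_cast
  ring

lemma G_val_D (a : IT k) :
    G a (k+2) = ((2*k+3 : ℤ) - (k+2)) * (2*(2*k+3) - (a.1.val : ℤ) - (qn a (2*k) : ℤ)) := by
  have ht : k+2 < 2*k+3 := by omega
  have h' : (⟨k+2, ht⟩ : Fin (2*k+3)).val = k+2 := rfl
  unfold G pp1 pp2
  rw [dif_pos ht, dif_pos ht, pi1_val_D a ⟨k+2, ht⟩ h', pi2_val_D a ⟨k+2, ht⟩ h']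
  push_cast
  ring

lemma G_val_E (a : IT k) (t : ℕ) (h : t < k) :
    G a (2*k+2-t) = ((t : ℤ) + 1) * (2*(2*k+3) - (qn a (2*t+1) : ℤ) - (qn a (2*t) : ℤ)) := by
  have ht : 2*k+2-t < 2*k+3 := by omega
  have h' : k+2 < (⟨2*k+2-t, ht⟩ : Fin (2*k+3)).val := by
    show k+2 < 2*k+2-t; omega
  unfold G pp1 pp2
  rw [dif_pos ht, dif_pos ht, pi1_val_E a ⟨2*k+2-t, ht⟩ h', pi2_val_E a ⟨2*k+2-t, ht⟩ h']
  have e1 : 2*(2*k+2-(⟨2*k+2-t, ht⟩ : Fin (2*k+3)).val)+1 = 2*t+1 := by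
    show 2*(2*k+2-(2*k+2-t))+1 = 2*t+1; omega
  have e2 : 2*(2*k+2-(⟨2*k+2-t, ht⟩ : Fin (2*k+3)).val) = 2*t := by
    show 2*(2*k+2-(2*k+2-t)) = 2*t; omega
  rw [e1, e2]
  have e3 : ((2*k+2-t : ℕ) : ℤ) = 2*(k:ℤ)+2-t := by omega
  rw [e3]
  ring

/-! ### fTot is constant -/

lemma fTot_key (c : IT k) :
    (fTot (Mat c) : ℤ) =
      (2*(k:ℤ)+4) * (2*(2*(k:ℤ)+3)*k -
        (((∑ t ∈ Finset.range (2*k+3), (t:ℤ)) - 2*(c.1.val:ℤ) - 1) - (qn c (2*k) : ℤ)))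
      + ((2*(k:ℤ)+3) - k) * (2*(2*(k:ℤ)+3) - (qn c (2*k) : ℤ) - ((c.1.val:ℤ)+1))
      + ((2*(k:ℤ)+3) - (k+1)) * (2*(2*(k:ℤ)+3) - ((c.1.val:ℤ)+1) - (c.1.val:ℤ))
      + ((2*(k:ℤ)+3) - (k+2)) * (2*(2*(k:ℤ)+3) - (c.1.val:ℤ) - (qn c (2*k) : ℤ)) := by
  have hq : ∀ t, ((qn c t : ℕ) : ℤ) = (qn c t : ℤ) := fun t => rfl
  rw [fTot_Mat_int]
  rw [← Finset.sum_range_add_sum_Ico (G c) (show k+3 ≤ 2*k+3 by omega)]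
  rw [Finset.sum_range_succ, Finset.sum_range_succ, Finset.sum_range_succ]
  have htail : ∑ t ∈ Finset.Ico (k+3) (2*k+3), G c t
      = ∑ t ∈ Finset.range k, G c (2*k+2-t) := by
    apply Finset.sum_nbij' (fun t => 2*k+2-t) (fun t => 2*k+2-t)
    · intro t ht; rw [Finset.mem_Ico] at ht; rw [Finset.mem_range]; omega
    · intro t ht; rw [Finset.mem_range] at ht; rw [Finset.mem_Ico]; omega
    · intro t ht; rw [Finset.mem_Ico] at ht; omega
    · intro t ht; rw [Finset.mem_range] at ht; omega
    · intro t ht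
      rw [Finset.mem_Ico] at ht
      congr 1
      omega
  rw [htail]
  have hcomb : ∑ t ∈ Finset.range k, G c t + ∑ t ∈ Finset.range k, G c (2*k+2-t)
      = (2*(k:ℤ)+4) * (2*(2*(k:ℤ)+3)*k - ∑ t ∈ Finset.range (2*k), (qn c t : ℤ)) := by
    rw [← Finset.sum_add_distrib]
    have h1 : ∀ t ∈ Finset.range k, G c t + G c (2*k+2-t)
        = (2*(k:ℤ)+4) * (2*(2*(k:ℤ)+3)) - (2*(k:ℤ)+4) * ((qn c (2*t) : ℤ) + (qn c (2*t+1) : ℤ)) := by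
      intro t ht
      rw [Finset.mem_range] at ht
      rw [G_val_A c t ht, G_val_E c t ht]
      push_cast
      ring
    rw [Finset.sum_congr rfl h1, Finset.sum_sub_distrib, Finset.sum_const, ← Finset.mul_sum,
      sum_pairs (fun t => (qn c t : ℤ)) k]
    simp only [Finset.card_range]
    push_cast
    ring
  have hqsum : ∑ t ∈ Finset.range (2*k), (qn c t : ℤ)
      = ((∑ t ∈ Finset.range (2*k+3), (t:ℤ)) - 2*(c.1.val:ℤ) - 1) - (qn c (2*k) : ℤ) := by
    have h0 := qn_sum c
    have h4 := congrArg (fun x : ℕ => (x : ℤ)) h0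
    push_cast at h4
    rw [Finset.sum_range_succ] at h4
    linarith
  rw [hqsum] at hcomb
  rw [G_val_B c, G_val_C c, G_val_D c]
  linear_combination hcomb

lemma fTot_const (a b : IT k) : fTot (Mat a) = fTot (Mat b) := by
  have h : (fTot (Mat a) : ℤ) = (fTot (Mat b) : ℤ) := by
    rw [fTot_key a, fTot_key b]
    ring
  exact_mod_cast h

/-! ### the swap action -/

def epsb (ε : Fin k → Bool) (u : ℕ) : Bool := if h : u < k then ε ⟨u, h⟩ else false

def swf (ε : Fin k → Bool) (t : ℕ) : ℕ :=
  if epsb ε (t/2) then (if t % 2 = 0 then t+1 else t-1) else t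

lemma epsb_lt (ε : Fin k → Bool) (u : ℕ) (h : epsb ε u = true) : u < k := by
  by_contra hc
  rw [epsb, dif_neg hc] at h
  exact Bool.false_ne_true h

lemma swf_lt (ε : Fin k → Bool) (t : ℕ) (ht : t < 2*k+1) : swf ε t < 2*k+1 := by
  unfold swf
  split_ifs with h1 h2
  · have := epsb_lt ε (t/2) h1; omega
  · omega
  · omega

lemma swf_invol (ε : Fin k → Bool) (t : ℕ) : swf ε (swf ε t) = t := by
  unfold swf
  by_cases h1 : epsb ε (t/2) = true
  · rw [if_pos h1]
    by_cases h2 : t % 2 = 0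
    · rw [if_pos h2]
      have e1 : (t+1)/2 = t/2 := by omega
      rw [e1, if_pos h1, if_neg (by omega : ¬ (t+1) % 2 = 0)]
      omega
    · rw [if_neg h2]
      have e1 : (t-1)/2 = t/2 := by omega
      rw [e1, if_pos h1, if_pos (by omega : (t-1) % 2 = 0)]
      omega
  · rw [if_neg h1, if_neg h1]

def swF (ε : Fin k → Bool) : Fin (2*k+1) → Fin (2*k+1) :=
  fun t => ⟨swf ε t.val, swf_lt ε t.val t.isLt⟩

lemma swF_invol (ε : Fin k → Bool) : Function.Involutive (swF ε) := by
  intro t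
  apply Fin.ext
  exact swf_invol ε t.val

def swE (ε : Fin k → Bool) : Fin (2*k+1) ↪ Fin (2*k+1) :=
  ⟨swF ε, (swF_invol ε).injective⟩

def flipIT (a : IT k) (ε : Fin k → Bool) : IT k := ⟨a.1, (swE ε).trans a.2⟩

lemma qn_flip (a : IT k) (ε : Fin k → Bool) (t : ℕ) (ht : t < 2*k+1) :
    qn (flipIT a ε) t = qn a (swf ε t) := by
  unfold qn
  rw [dif_pos ht, dif_pos (swf_lt ε t ht)]
  rfl

lemma swf_even (ε : Fin k → Bool) (u : ℕ) (hu : u < k) :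
    swf ε (2*u) = if ε ⟨u, hu⟩ then 2*u+1 else 2*u := by
  unfold swf epsb
  have e : 2*u/2 = u := by omega
  rw [e, dif_pos hu]
  by_cases h : ε ⟨u, hu⟩ = true
  · rw [if_pos h, if_pos h, if_pos (by omega : 2*u % 2 = 0)]
  · rw [if_neg h, if_neg h]

lemma swf_odd (ε : Fin k → Bool) (u : ℕ) (hu : u < k) :
    swf ε (2*u+1) = if ε ⟨u, hu⟩ then 2*u else 2*u+1 := by
  unfold swf epsb
  have e : (2*u+1)/2 = u := by omega
  rw [e, dif_pos hu]
  by_cases h : ε ⟨u, hu⟩ = true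
  · rw [if_pos h, if_pos h, if_neg (by omega : ¬ (2*u+1) % 2 = 0)]
    omega
  · rw [if_neg h, if_neg h]

lemma swf_top (ε : Fin k → Bool) : swf ε (2*k) = 2*k := by
  unfold swf epsb
  have e : 2*k/2 = k := by omega
  rw [e, dif_neg (by omega)]
  simp

/-! ### Mat is invariant under flips -/

lemma pi_flip (a : IT k) (ε : Fin k → Bool) (i : Fin (2*k+3)) :
    (pi1 (flipIT a ε) i = pi1 a i ∧ pi2 (flipIT a ε) i = pi2 a i) ∨
    (pi1 (flipIT a ε) i = pi2 a i ∧ pi2 (flipIT a ε) i = pi1 a i) := by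
  have hi := i.isLt
  have hfst : (flipIT a ε).1 = a.1 := rfl
  by_cases h1 : i.val < k
  · have e1 := pi1_val_A (flipIT a ε) i h1
    have e2 := pi2_val_A (flipIT a ε) i h1
    have e3 := pi1_val_A a i h1
    have e4 := pi2_val_A a i h1
    rw [qn_flip a ε _ (by omega), swf_even ε i.val h1] at e1
    rw [qn_flip a ε _ (by omega), swf_odd ε i.val h1] at e2
    by_cases hε : ε ⟨i.val, h1⟩ = true
    · right
      rw [if_pos hε] at e1 e2
      exact ⟨Fin.ext (by omega), Fin.ext (by omega)⟩
    · left
      rw [if_neg hε] at e1 e2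
      exact ⟨Fin.ext (by omega), Fin.ext (by omega)⟩
  · by_cases h2 : i.val = k
    · left
      have e1 := pi1_val_B (flipIT a ε) i h2
      have e2 := pi2_val_B (flipIT a ε) i h2
      have e3 := pi1_val_B a i h2
      have e4 := pi2_val_B a i h2
      rw [qn_flip a ε _ (by omega), swf_top ε] at e1
      rw [hfst] at e2
      exact ⟨Fin.ext (by omega), Fin.ext (by omega)⟩
    · by_cases h3 : i.val = k+1
      · left
        have e1 := pi1_val_C (flipIT a ε) i h3
        have e2 := pi2_val_C (flipIT a ε) i h3
        have e3 := pi1_val_C a i h3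
        have e4 := pi2_val_C a i h3
        rw [hfst] at e1 e2
        exact ⟨Fin.ext (by omega), Fin.ext (by omega)⟩
      · by_cases h4 : i.val = k+2
        · left
          have e1 := pi1_val_D (flipIT a ε) i h4
          have e2 := pi2_val_D (flipIT a ε) i h4
          have e3 := pi1_val_D a i h4
          have e4 := pi2_val_D a i h4
          rw [qn_flip a ε _ (by omega), swf_top ε] at e2
          rw [hfst] at e1
          exact ⟨Fin.ext (by omega), Fin.ext (by omega)⟩
        · have h5 : k+2 < i.val := by omega
          have hu : 2*k+2-i.val < k := by omega
          have e1 := pi1_val_E (flipIT a ε) i h5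
          have e2 := pi2_val_E (flipIT a ε) i h5
          have e3 := pi1_val_E a i h5
          have e4 := pi2_val_E a i h5
          rw [qn_flip a ε _ (by omega), swf_odd ε _ hu] at e1
          rw [qn_flip a ε _ (by omega), swf_even ε _ hu] at e2
          by_cases hε : ε ⟨2*k+2-i.val, hu⟩ = true
          · right
            rw [if_pos hε] at e1 e2
            exact ⟨Fin.ext (by omega), Fin.ext (by omega)⟩
          · left
            rw [if_neg hε] at e1 e2
            exact ⟨Fin.ext (by omega), Fin.ext (by omega)⟩

lemma Mat_flip (a : IT k) (ε : Fin k → Bool) : Mat (flipIT a ε) = Mat a := by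
  ext i j
  show Mat (flipIT a ε) i j = Mat a i j
  unfold Mat
  rcases pi_flip a ε i with ⟨h1, h2⟩ | ⟨h1, h2⟩
  · rw [h1, h2]
  · rw [h1, h2]
    exact add_comm _ _

/-! ### recovering the index from the matrix -/

lemma qn_ne_y (a : IT k) (t : ℕ) (h : t < 2*k+1) :
    qn a t ≠ a.1.val ∧ qn a t ≠ a.1.val + 1 := by
  unfold qn
  rw [dif_pos h]
  constructor
  · intro hv
    exact (a.2 ⟨t, h⟩).2.1 (Fin.ext hv)
  · intro hv
    exact (a.2 ⟨t, h⟩).2.2 (Fin.ext hv)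

lemma qn_inj (a : IT k) (s t : ℕ) (hs : s < 2*k+1) (ht : t < 2*k+1)
    (h : qn a s = qn a t) : s = t := by
  unfold qn at h
  rw [dif_pos hs, dif_pos ht] at h
  have := a.2.injective (Subtype.val_injective (Fin.ext h))
  exact congrArg Fin.val this
lemma Mat_one_iff (a : IT k) (i j : Fin (2*k+3)) :
    Mat a i j ≠ 0 ↔ (pi1 a i = j ∨ pi2 a i = j) := by
  unfold Mat
  split_ifs with h1 h2 h3 <;> simp_all

lemma flip_of_Mat_eq (a b : IT k) (hM : Mat b = Mat a) : ∃ ε, b = flipIT a ε := by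
  have hone : ∀ i j, (pi1 b i = j ∨ pi2 b i = j) ↔ (pi1 a i = j ∨ pi2 a i = j) := by
    intro i j
    rw [← Mat_one_iff, ← Mat_one_iff, hM]
  -- step 1 : the distinguished column is the same
  have hY : b.1 = a.1 := by
    set i : Fin (2*k+3) := ⟨k+1, by omega⟩ with hidef
    have hiv : i.val = k+1 := rfl
    have c1 := (hone i (pi1 b i)).1 (Or.inl rfl)
    have c2 := (hone i (pi2 b i)).1 (Or.inr rfl)
    have v1 := pi1_val_C a i hiv
    have v2 := pi2_val_C a i hiv
    have w1 := pi1_val_C b i hiv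
    have w2 := pi2_val_C b i hiv
    apply Fin.ext
    rcases c1 with h | h <;> rcases c2 with h' | h' <;>
      (have hb1 := congrArg Fin.val h; have hb2 := congrArg Fin.val h'; omega)
  -- step 2 : the last q value is the same
  have hX : qn b (2*k) = qn a (2*k) := by
    set i : Fin (2*k+3) := ⟨k, by omega⟩ with hidef
    have hiv : i.val = k := rfl
    have c1 := (hone i (pi1 b i)).1 (Or.inl rfl)
    have v1 := pi1_val_B a i hiv
    have v2 := pi2_val_B a i hiv
    have w1 := pi1_val_B b i hiv
    have hne := (qn_ne_y b (2*k) (by omega)).2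
    rw [hY] at hne
    rcases c1 with h | h <;> (have hb := congrArg Fin.val h; omega)
  -- step 3 : the pairs agree up to swap
  have hpair : ∀ u, u < k →
      (qn b (2*u) = qn a (2*u) ∧ qn b (2*u+1) = qn a (2*u+1)) ∨
      (qn b (2*u) = qn a (2*u+1) ∧ qn b (2*u+1) = qn a (2*u)) := by
    intro u hu
    set i : Fin (2*k+3) := ⟨u, by omega⟩ with hidef
    have hiv : i.val < k := hu
    have hivv : i.val = u := rfl
    have c1 := (hone i (pi1 b i)).1 (Or.inl rfl)
    have c2 := (hone i (pi2 b i)).1 (Or.inr rfl)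
    have v1 := pi1_val_A a i hiv
    have v2 := pi2_val_A a i hiv
    have w1 := pi1_val_A b i hiv
    have w2 := pi2_val_A b i hiv
    rw [hivv] at v1 v2 w1 w2
    have d1 : qn b (2*u) ≠ qn b (2*u+1) := by
      intro h; have := qn_inj b _ _ (by omega) (by omega) h; omega
    have d2 : qn a (2*u) ≠ qn a (2*u+1) := by
      intro h; have := qn_inj a _ _ (by omega) (by omega) h; omega
    rcases c1 with h | h <;> rcases c2 with h' | h' <;>
      (have hb1 := congrArg Fin.val h; have hb2 := congrArg Fin.val h'; omega)
  -- assemble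
  obtain ⟨Yb, qb⟩ := b
  simp only at hY
  subst hY
  refine ⟨fun u => decide (qn ⟨a.1, qb⟩ (2*u.val) ≠ qn a (2*u.val)), ?_⟩
  set ε : Fin k → Bool := fun u => decide (qn ⟨a.1, qb⟩ (2*u.val) ≠ qn a (2*u.val)) with hε
  show Sigma.mk a.1 qb = flipIT a ε
  unfold flipIT
  apply congrArg (Sigma.mk a.1)
  apply Function.Embedding.ext
  intro t
  apply Subtype.ext
  apply Fin.ext
  have hL : ((qb t).val.val) = qn ⟨a.1, qb⟩ t.val := by
    unfold qn
    rw [dif_pos t.isLt, Fin.eta]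
  have hR : ((((swE ε).trans a.2) t).val.val) = qn a (swf ε t.val) := by
    unfold qn
    rw [dif_pos (swf_lt ε t.val t.isLt)]
    rfl
  rw [hL, hR]
  have hcase : (∃ u, u < k ∧ t.val = 2*u) ∨ (∃ u, u < k ∧ t.val = 2*u+1) ∨ t.val = 2*k := by
    have h := t.isLt
    by_cases hp : t.val % 2 = 0
    · by_cases htk : t.val = 2*k
      · right; right; exact htk
      · left; exact ⟨t.val/2, by omega, by omega⟩
    · right; left; exact ⟨t.val/2, by omega, by omega⟩
  rcases hcase with ⟨u, hu, htu⟩ | ⟨u, hu, htu⟩ | htop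
  · rw [htu, swf_even ε u hu]
    have d2 : qn a (2*u) ≠ qn a (2*u+1) := by
      intro h; have := qn_inj a _ _ (by omega) (by omega) h; omega
    by_cases hne : qn ⟨a.1, qb⟩ (2*u) = qn a (2*u)
    · rw [show ε ⟨u, hu⟩ = false from by simp [hε, hne], if_neg (by simp)]
      exact hne
    · rw [show ε ⟨u, hu⟩ = true from by simp [hε, hne], if_pos rfl]
      rcases hpair u hu with ⟨h1, h2⟩ | ⟨h1, h2⟩ <;> omega
  · rw [htu, swf_odd ε u hu]
    have d2 : qn a (2*u) ≠ qn a (2*u+1) := by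
      intro h; have := qn_inj a _ _ (by omega) (by omega) h; omega
    by_cases hne : qn ⟨a.1, qb⟩ (2*u) = qn a (2*u)
    · rw [show ε ⟨u, hu⟩ = false from by simp [hε, hne], if_neg (by simp)]
      rcases hpair u hu with ⟨h1, h2⟩ | ⟨h1, h2⟩ <;> omega
    · rw [show ε ⟨u, hu⟩ = true from by simp [hε, hne], if_pos rfl]
      rcases hpair u hu with ⟨h1, h2⟩ | ⟨h1, h2⟩ <;> omega
  · rw [htop, swf_top ε]
    exact hX

/-! ### counting -/

lemma flip_inj (a : IT k) : Function.Injective (flipIT a) := by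
  intro ε ε' h
  funext u
  have hq := congrArg (fun x : IT k => qn x (2*u.val)) h
  rw [qn_flip a ε _ (by have := u.isLt; omega), qn_flip a ε' _ (by have := u.isLt; omega),
    swf_even ε u.val u.isLt, swf_even ε' u.val u.isLt] at hq
  have hu := u.isLt
  by_cases h1 : ε ⟨u.val, u.isLt⟩ = true <;> by_cases h2 : ε' ⟨u.val, u.isLt⟩ = true
  · rw [Fin.eta] at h1 h2; rw [h1, h2]
  · rw [if_pos h1, if_neg h2] at hq
    have := qn_inj a _ _ (by omega) (by omega) hq
    omega
  · rw [if_neg h1, if_pos h2] at hq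
    have := qn_inj a _ _ (by omega) (by omega) hq
    omega
  · rw [Fin.eta] at h1 h2
    rw [Bool.eq_false_iff.2 h1, Bool.eq_false_iff.2 h2]

lemma card_SubT (Y : Fin (2*k+2)) : Fintype.card (SubT k Y) = 2*k+1 := by
  rw [Fintype.card_subtype]
  have h : Finset.univ.filter (fun c : Fin (2*k+3) => c ≠ Y.castSucc ∧ c ≠ Y.succ)
      = Finset.univ \ {Y.castSucc, Y.succ} := by
    ext c
    simp [Finset.mem_sdiff]
  rw [h, Finset.card_sdiff_of_subset (Finset.subset_univ _)]
  rw [Finset.card_insert_of_notMem (by simp [Fin.ext_iff]), Finset.card_singleton]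
  simp

lemma card_IT : Fintype.card (IT k) = (2*k+2) * Nat.factorial (2*k+1) := by
  unfold IT
  rw [Fintype.card_sigma]
  have h : ∀ Y : Fin (2*k+2), Fintype.card (Fin (2*k+1) ↪ SubT k Y) = Nat.factorial (2*k+1) := by
    intro Y
    rw [Fintype.card_embedding_eq, card_SubT, Fintype.card_fin, Nat.descFactorial_self]
  rw [Finset.sum_congr rfl fun Y _ => h Y, Finset.sum_const, Finset.card_univ, Fintype.card_fin,
    smul_eq_mul]

lemma fiber_card (a : IT k) :
    (Finset.univ.filter (fun x : IT k => Mat x = Mat a)).card = 2^k := by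
  classical
  have himg : Finset.univ.filter (fun x : IT k => Mat x = Mat a)
      = Finset.image (flipIT a) Finset.univ := by
    ext x
    simp only [Finset.mem_filter, Finset.mem_univ, true_and, Finset.mem_image]
    constructor
    · intro hx
      obtain ⟨ε, rfl⟩ := flip_of_Mat_eq a x hx
      exact ⟨ε, rfl⟩
    · rintro ⟨ε, rfl⟩
      exact Mat_flip a ε
  rw [himg, Finset.card_image_of_injective _ (flip_inj a), Finset.card_univ]
  simp

lemma two_pow_mul_card_image :
    2^k * (Finset.image (fun a : IT k => Mat a) Finset.univ).card
      = Nat.factorial (2*k+2) := by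
  classical
  have h1 := Finset.card_eq_sum_card_fiberwise
    (f := fun a : IT k => Mat a) (s := Finset.univ)
    (t := Finset.image (fun a : IT k => Mat a) Finset.univ)
    (fun x _ => Finset.mem_image_of_mem _ (Finset.mem_univ x))
  have h2 : ∀ b ∈ Finset.image (fun a : IT k => Mat a) Finset.univ,
      (Finset.univ.filter (fun x : IT k => Mat x = b)).card = 2^k := by
    intro b hb
    obtain ⟨a, _, rfl⟩ := Finset.mem_image.1 hb
    exact fiber_card a
  rw [Finset.sum_congr rfl h2, Finset.sum_const, smul_eq_mul, Finset.card_univ, card_IT] at h1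
  rw [show Nat.factorial (2*k+2) = (2*k+2) * Nat.factorial (2*k+1) from by
      rw [show 2*k+2 = 2*k+1+1 by omega]; exact Nat.factorial_succ _, h1]
  exact mul_comm _ _

/-! ### main theorem -/

/-- For odd `n ≥ 3` there is an antichain of size
`(n−1)!/2^{(n−3)/2}` in the Bruhat order of `A(n,2)`; consequently
`w(n,2) ≥ (n−1)!/2^{(n−3)/2}`. -/
theorem antichain_odd (n : ℕ) (hn : 3 ≤ n) (ho : Odd n) :
    ∃ D : Set (Matrix (Fin n) (Fin n) ℕ), D ⊆ classA n 2 ∧ IsAntichainB D ∧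
      D.ncard = Nat.factorial (n-1) / 2^((n-3)/2) := by
  obtain ⟨m, hm⟩ := ho
  obtain ⟨k, rfl⟩ : ∃ k, n = 2*k+3 := ⟨m-1, by omega⟩
  classical
  refine ⟨↑(Finset.image (fun a : IT k => Mat a) Finset.univ), ?_, ?_, ?_⟩
  · intro A hA
    rw [Finset.mem_coe, Finset.mem_image] at hA
    obtain ⟨a, _, rfl⟩ := hA
    exact Mat_mem a
  · intro A hA C hC hne
    rw [Finset.mem_coe, Finset.mem_image] at hA hC
    obtain ⟨a, _, rfl⟩ := hA
    obtain ⟨c, _, rfl⟩ := hC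
    exact incomp_of_fTot _ _ (fTot_const a c) hne
  · rw [Set.ncard_coe_finset]
    have h2 := two_pow_mul_card_image (k := k)
    have e1 : 2*k+3-1 = 2*k+2 := by omega
    have e2 : (2*k+3-3)/2 = k := by omega
    rw [e1, e2]
    refine (Nat.div_eq_of_eq_mul_left (pow_pos (by norm_num) k) ?_).symm
    rw [← h2]
    ring
end

section
/- Let k ≥ 1 and n = 2k+1, and let C be a 2k × k (0,1)-matrix all of whose row sums equal 1 and all of whose column sums equal 2. Define the n × n (0,1)-matrix A_C by: the submatrix of A_C on rows 1,…,2k and columns 1,…,k equals C; the submatrix on rows 2,…,2k+1 and columns k+1,…,2k equals C* (the conjugate of C); the (1,n)-entry and the (n,n)-entry equal 1; and all other entries equal 0. Then A_C ∈ A(n,2) and ν(A_C) = k(4k−1). -/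
open Finset

/-!
With 0-based indices, the ones of `A_C` are the graph `a ↦ (a, g a)` of the column function `g`
of `C`, its mirror image `a ↦ (a + 1, 2k - 1 - g a)` (the ones of `C*`, one row lower), and the
two corners `(0, 2k)`, `(2k, 2k)`; every row and every column contains exactly two of them.
Inversions are counted block by block. Two rows of `C` whose ones lie in different columns form an
inversion in exactly one of `C` and `C*`, which gives `2k(k - 1)`. The ones of `C*` and the corner
`(0, 2k)` occupy the rows `0, …, 2k` once each and lie to the right of `C`, so they give
`(2k).choose 2 = k(2k - 1)` inversions with the ones of `C`. The corner `(0, 2k)` is inverted with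
all `2k` ones of `C*`, and no other pair is inverted: `2k(k - 1) + k(2k - 1) + 2k = k(4k - 1)`.
-/

section ZeroOne

variable {m n : ℕ} {A : Matrix (Fin m) (Fin n) ℕ}

lemma ZeroOne.rowSum_eq_card (hA : ZeroOne A) (i : Fin m) : rowSum A i = #{j | A i j = 1} := by
  rw [rowSum, card_eq_sum_ones, sum_filter]
  refine sum_congr rfl fun j _ => ?_
  rcases hA i j with h | h <;> simp [h]

lemma ZeroOne.exists_eq_ite_of_rowSum_eq_one (hA : ZeroOne A) (hrow : ∀ i, rowSum A i = 1) :
    ∃ g : Fin m → Fin n, ∀ i j, A i j = if j = g i then 1 else 0 := by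
  have hsingle : ∀ i, ∃ j, ({j | A i j = 1} : Finset (Fin n)) = {j} := fun i =>
    card_eq_one.mp (hA.rowSum_eq_card i ▸ hrow i)
  choose g hg using hsingle
  refine ⟨g, fun i j => ?_⟩
  have hmem : A i j = 1 ↔ j = g i := by simpa using congrArg (j ∈ ·) (hg i)
  split_ifs with h
  · exact hmem.mpr h
  · exact (hA i j).resolve_right (mt hmem.mp h)

lemma colSum_eq_card_of_eq_ite {g : Fin m → Fin n}
    (hA : ∀ i j, A i j = if j = g i then 1 else 0) (j : Fin n) : colSum A j = #{i | g i = j} := by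
  simp [colSum, hA, eq_comm]

end ZeroOne

section Inversions

variable {R S α β γ : Type*} [LinearOrder R] [LinearOrder S]
  [Fintype α] [Fintype β] [Fintype γ]

def invCount (u : α → R × S) (v : β → R × S) : ℕ :=
  #{xy : α × β | (u xy.1).1 < (v xy.2).1 ∧ (v xy.2).2 < (u xy.1).2}

lemma invCount_sumElim_left (u : α → R × S) (u' : β → R × S) (v : γ → R × S) :
    invCount (Sum.elim u u') v = invCount u v + invCount u' v := by
  simp only [invCount, card_filter, Fintype.sum_prod_type, Fintype.sum_sum_type, Sum.elim_inl,
    Sum.elim_inr]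
  rfl

lemma invCount_sumElim_right (u : α → R × S) (v : β → R × S) (v' : γ → R × S) :
    invCount u (Sum.elim v v') = invCount u v + invCount u v' := by
  simp only [invCount, card_filter, Fintype.sum_prod_type, Fintype.sum_sum_type, Sum.elim_inl,
    Sum.elim_inr, sum_add_distrib]
  rfl

end Inversions

section Support

variable {ι : Type*} [Fintype ι] {m n : ℕ}

lemma rowSum_eq_card_of_eq_indicator {A : Matrix (Fin m) (Fin n) ℕ} {p : ι → Fin m × Fin n}
    (hp : Function.Injective p) (hA : ∀ i j, A i j = if (i, j) ∈ Set.range p then 1 else 0)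
    (i : Fin m) : rowSum A i = #{x | (p x).1 = i} := by
  rw [rowSum, Fintype.sum_congr _ _ (hA i), sum_boole, Nat.cast_id]
  symm
  refine card_bij (fun x _ => (p x).2) (fun x hx => ?_) (fun x hx y hy hxy => hp ?_) ?_
  · simp only [mem_filter, mem_univ, true_and] at hx ⊢
    exact ⟨x, by rw [← hx]⟩
  · simp only [mem_filter, mem_univ, true_and] at hx hy
    exact Prod.ext (hx.trans hy.symm) hxy
  · simp only [mem_filter, mem_univ, true_and, Set.mem_range]
    rintro j ⟨x, hx⟩
    exact ⟨x, by rw [hx], by rw [hx]⟩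

lemma colSum_eq_card_of_eq_indicator {A : Matrix (Fin m) (Fin n) ℕ} {p : ι → Fin m × Fin n}
    (hp : Function.Injective p) (hA : ∀ i j, A i j = if (i, j) ∈ Set.range p then 1 else 0)
    (j : Fin n) : colSum A j = #{x | (p x).2 = j} := by
  have hAt : ∀ i j,
      A.transpose i j = if (i, j) ∈ Set.range (Prod.swap ∘ p) then 1 else 0 := by
    intro i j
    simp only [Matrix.transpose_apply, hA j i, Set.mem_range, Function.comp_apply,
      Prod.swap_eq_iff_eq_swap, Prod.swap_prod_mk]
  exact rowSum_eq_card_of_eq_indicator (Prod.swap_injective.comp hp) hAt j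

lemma nu_eq_invCount_of_eq_indicator
    {A : Matrix (Fin m) (Fin n) ℕ} {p : ι → Fin m × Fin n} (hp : Function.Injective p)
    (hA : ∀ i j, A i j = if (i, j) ∈ Set.range p then 1 else 0) : nu A = invCount p p := by
  have hone : ∀ q : Fin m × Fin n, A q.1 q.2 = 1 ↔ q ∈ Set.range p := fun q => by
    rw [hA]; split_ifs with h <;> simp [h]
  symm
  refine card_bij (fun xy _ => (p xy.1, p xy.2)) (fun xy hxy => ?_)
    (fun xy _ xy' _ h => ?_) (fun q hq => ?_)
  · simp only [mem_filter, mem_univ, true_and] at hxy ⊢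
    exact ⟨hxy.1, hxy.2, (hone _).mpr ⟨_, rfl⟩, (hone _).mpr ⟨_, rfl⟩⟩
  · simp only [Prod.mk.injEq] at h
    exact Prod.ext (hp h.1) (hp h.2)
  · simp only [mem_filter, mem_univ, true_and] at hq
    obtain ⟨x, hx⟩ := (hone q.1).mp hq.2.2.1
    obtain ⟨y, hy⟩ := (hone q.2).mp hq.2.2.2
    refine ⟨(x, y), ?_, ?_⟩
    · simp only [mem_filter, mem_univ, true_and, hx, hy]
      exact ⟨hq.1, hq.2.1⟩
    · simp [hx, hy]

lemma mem_classA_of_eq_indicator {r : ℕ} {A : Matrix (Fin n) (Fin n) ℕ}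
    {p : ι → Fin n × Fin n} (hp : Function.Injective p)
    (hA : ∀ i j, A i j = if (i, j) ∈ Set.range p then 1 else 0)
    (hrow : ∀ i, #{x | (p x).1 = i} = r) (hcol : ∀ j, #{x | (p x).2 = j} = r) :
    A ∈ classA n r := by
  refine ⟨fun i j => ?_, fun i => ?_, fun j => ?_⟩
  · rw [hA i j]
    split_ifs <;> simp
  · rw [rowSum_eq_card_of_eq_indicator hp hA, hrow]
  · rw [colSum_eq_card_of_eq_indicator hp hA, hcol]

end Support

section Counting

variable {α β : Type*} [Fintype α]

lemma card_filter_prod [Fintype β] (P : α × β → Prop) [DecidablePred P] :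
    #{ab | P ab} = ∑ a, #{b | P (a, b)} := by
  simp only [card_filter, Fintype.sum_prod_type]

lemma card_filter_prod_right [Fintype β] (P : α × β → Prop) [DecidablePred P] :
    #{ab | P ab} = ∑ b, #{a | P (a, b)} := by
  simp only [card_filter, Fintype.sum_prod_type_right]

lemma two_mul_card_filter_lt_and [LinearOrder α] (r : α → α → Prop) [DecidableRel r]
    (hsymm : ∀ a b, r a b ↔ r b a) (hirr : ∀ a, ¬ r a a) :
    2 * #{ab : α × α | ab.1 < ab.2 ∧ r ab.1 ab.2} = #{ab : α × α | r ab.1 ab.2} := by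
  have hswap : #{ab : α × α | ab.2 < ab.1 ∧ r ab.1 ab.2}
      = #{ab : α × α | ab.1 < ab.2 ∧ r ab.1 ab.2} :=
    card_equiv (Equiv.prodComm α α) fun ab => by simp [hsymm ab.1]
  have hdisj : Disjoint (univ.filter fun ab : α × α => ab.1 < ab.2 ∧ r ab.1 ab.2)
      (univ.filter fun ab : α × α => ab.2 < ab.1 ∧ r ab.1 ab.2) :=
    disjoint_filter.mpr fun _ _ h h' => lt_asymm h.1 h'.1
  rw [two_mul]
  nth_rewrite 2 [← hswap]
  rw [← card_union_of_disjoint hdisj, ← filter_or]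
  congr 1
  ext ⟨a, b⟩
  rcases lt_trichotomy a b with h | rfl | h
  · simp [h, h.not_gt]
  · simp [hirr]
  · simp [h, h.not_gt]

lemma card_filter_apply_ne_apply [DecidableEq β] (g : α → β) {r : ℕ}
    (hfib : ∀ a, #{b | g b = g a} = r) :
    #{ab : α × α | g ab.1 ≠ g ab.2} = Fintype.card α * (Fintype.card α - r) := by
  have hrow : ∀ a, #{b | g a ≠ g b} = Fintype.card α - r := fun a => by
    have hc := card_filter_add_card_filter_not (s := univ) (fun b => g b = g a)
    simp only [hfib a, card_univ] at hc
    simp only [ne_comm (a := g a), ne_eq]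
    omega
  rw [card_filter_prod]
  simp [hrow]

lemma card_filter_val_add_eq {N : ℕ} (s c : ℕ) :
    #{a : Fin N | (a : ℕ) + s = c} = if s ≤ c ∧ c < N + s then 1 else 0 := by
  split_ifs with h
  · rw [card_eq_one]
    exact ⟨⟨c - s, by omega⟩, by ext a; simp [Fin.ext_iff]; omega⟩
  · rw [card_eq_zero, filter_eq_empty_iff]
    intro a _
    omega

lemma card_filter_val_apply_eq {k r : ℕ} {g : α → Fin k} (hfib : ∀ w, #{a | g a = w} = r)
    (c : ℕ) : #{a | (g a : ℕ) = c} = if c < k then r else 0 := by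
  split_ifs with hc
  · convert hfib ⟨c, hc⟩ using 2
    simp [Fin.ext_iff]
  · rw [card_eq_zero, filter_eq_empty_iff]
    intro a _
    have := (g a).2
    omega

end Counting

section ACOnes

variable {k : ℕ} (g : Fin (2 * k) → Fin k)

def leftOnes : Fin (2 * k) → Fin (2 * k + 1) × Fin (2 * k + 1) :=
  fun a => (a.castSucc, Fin.castLE (by omega) (g a))

def rightOnes : Fin (2 * k) → Fin (2 * k + 1) × Fin (2 * k + 1) :=
  fun a => (a.succ, ⟨2 * k - 1 - g a, by omega⟩)

def cornerOnes (k : ℕ) : Fin 2 → Fin (2 * k + 1) × Fin (2 * k + 1) :=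
  ![(0, Fin.last _), (Fin.last _, Fin.last _)]

def acOnes : Fin (2 * k) ⊕ Fin (2 * k) ⊕ Fin 2 → Fin (2 * k + 1) × Fin (2 * k + 1) :=
  Sum.elim (leftOnes g) (Sum.elim (rightOnes g) (cornerOnes k))

lemma acOnes_injective (hk : 1 ≤ k) : Function.Injective (acOnes g) := by
  have hleft : Function.Injective (leftOnes g) := fun a b h =>
    Fin.castSucc_injective _ (congrArg Prod.fst h)
  have hright : Function.Injective (rightOnes g) := fun a b h =>
    Fin.succ_injective _ (congrArg Prod.fst h)
  have hcorner : Function.Injective (cornerOnes k) := by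
    intro e e' h
    fin_cases e <;> fin_cases e' <;> simp_all [cornerOnes, Fin.ext_iff]
  refine hleft.sumElim (hright.sumElim hcorner fun a e h => ?_) fun a x h => ?_
  · have hcol := congrArg (fun q => (q.2 : ℕ)) h
    fin_cases e <;> simp [rightOnes, cornerOnes] at hcol <;> omega
  · have hcol := congrArg (fun q => (q.2 : ℕ)) h
    have := (g a).2
    rcases x with b | e
    · simp [leftOnes, rightOnes] at hcol; omega
    · fin_cases e <;> simp [leftOnes, cornerOnes] at hcol <;> omega

lemma card_filter_acOnes (P : Fin (2 * k + 1) × Fin (2 * k + 1) → Prop) [DecidablePred P] :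
    #{x | P (acOnes g x)} =
      #{a | P (leftOnes g a)} + #{a | P (rightOnes g a)} + #{e | P (cornerOnes k e)} := by
  rw [card_filter, Fintype.sum_sum_type, Fintype.sum_sum_type, card_filter, card_filter,
    card_filter, add_assoc]
  rfl

lemma card_acOnes_row (i : Fin (2 * k + 1)) : #{x | (acOnes g x).1 = i} = 2 := by
  have hleft := card_filter_val_add_eq (N := 2 * k) 0 i
  have hright := card_filter_val_add_eq (N := 2 * k) 1 i
  simp only [add_zero] at hleft
  rw [card_filter_acOnes g (fun q => q.1 = i)]
  simp only [leftOnes, rightOnes, Fin.ext_iff, Fin.val_castSucc, Fin.val_succ, hleft, hright]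
  rw [card_filter, Fin.sum_univ_two]
  simp only [cornerOnes, Fin.isValue, Matrix.cons_val_zero, Matrix.cons_val_one, Fin.val_zero,
    Fin.val_last]
  have := i.2
  grind

variable {g}

lemma card_filter_sub_val_apply_eq {r : ℕ} (hfib : ∀ w, #{a | g a = w} = r) (c : ℕ) :
    #{a | 2 * k - 1 - (g a : ℕ) = c} = if k ≤ c ∧ c < 2 * k then r else 0 := by
  have hg : ∀ a, (g a : ℕ) < k := fun a => (g a).2
  split_ifs with hc
  · have h := card_filter_val_apply_eq hfib (2 * k - 1 - c)
    rw [if_pos (by omega)] at h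
    refine Eq.trans ?_ h
    congr 1
    ext a
    simp only [mem_filter, mem_univ, true_and]
    have := hg a
    omega
  · rw [card_eq_zero, filter_eq_empty_iff]
    intro a _
    have := hg a
    omega

lemma card_acOnes_col (hfib : ∀ w, #{a | g a = w} = 2) (j : Fin (2 * k + 1)) :
    #{x | (acOnes g x).2 = j} = 2 := by
  rw [card_filter_acOnes g (fun q => q.2 = j)]
  simp only [leftOnes, rightOnes, Fin.ext_iff, Fin.val_castLE, card_filter_val_apply_eq hfib,
    card_filter_sub_val_apply_eq hfib]
  rw [card_filter, Fin.sum_univ_two]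
  simp only [cornerOnes, Fin.isValue, Matrix.cons_val_zero, Matrix.cons_val_one, Fin.val_last]
  have := j.2
  grind

end ACOnes

section ACInversions

variable {k : ℕ} (g : Fin (2 * k) → Fin k)

lemma invCount_leftOnes_rightOnes : invCount (leftOnes g) (rightOnes g) = 0 := by
  rw [invCount, card_eq_zero, filter_eq_empty_iff]
  rintro ⟨a, b⟩ -
  simp only [leftOnes, rightOnes, Fin.lt_def, Fin.val_castLE]
  have := (g a).2
  omega

lemma invCount_cornerOnes_right {α : Type*} [Fintype α]
    (u : α → Fin (2 * k + 1) × Fin (2 * k + 1)) : invCount u (cornerOnes k) = 0 := by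
  rw [invCount, card_eq_zero, filter_eq_empty_iff]
  rintro ⟨x, e⟩ -
  fin_cases e <;> simp [cornerOnes, Fin.le_last]

lemma invCount_leftOnes_add_invCount_rightOnes :
    invCount (leftOnes g) (leftOnes g) + invCount (rightOnes g) (rightOnes g)
      = #{ab : Fin (2 * k) × Fin (2 * k) | ab.1 < ab.2 ∧ g ab.1 ≠ g ab.2} := by
  simp only [invCount, card_filter, ← sum_add_distrib]
  refine sum_congr rfl fun ab _ => ?_
  simp only [leftOnes, rightOnes, Fin.lt_def, Fin.val_castLE, Fin.val_castSucc, Fin.val_succ,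
    ne_eq, Fin.ext_iff]
  have := (g ab.1).2
  have := (g ab.2).2
  split_ifs <;> omega

lemma invCount_rightOnes_add_invCount_cornerOnes_left :
    invCount (rightOnes g) (leftOnes g) + invCount (cornerOnes k) (leftOnes g)
      = #{ab : Fin (2 * k) × Fin (2 * k) | ab.1 < ab.2} := by
  rw [invCount, invCount, card_filter_prod_right, card_filter_prod_right, card_filter_prod_right,
    ← sum_add_distrib]
  refine sum_congr rfl fun b _ => ?_
  have hright :
      #{a | (rightOnes g a).1 < (leftOnes g b).1 ∧ (leftOnes g b).2 < (rightOnes g a).2}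
        = #{a : Fin (2 * k) | (a : ℕ) < b - 1} := by
    congr 1
    ext a
    simp only [mem_filter, mem_univ, true_and, leftOnes, rightOnes, Fin.lt_def, Fin.val_castLE,
      Fin.val_castSucc, Fin.val_succ]
    have := (g a).2
    have := (g b).2
    omega
  have hlt : #{a : Fin (2 * k) | a < b} = #{a : Fin (2 * k) | (a : ℕ) < b} := by
    simp only [Fin.lt_def]
  rw [hright, hlt, Fin.card_filter_val_lt, Fin.card_filter_val_lt, card_filter, Fin.sum_univ_two]
  simp only [cornerOnes, leftOnes, Fin.isValue, Matrix.cons_val_zero, Matrix.cons_val_one,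
    Fin.lt_def, Fin.val_zero, Fin.val_last, Fin.val_castSucc, Fin.val_castLE]
  have := (g b).2
  have := b.2
  grind

lemma invCount_cornerOnes_rightOnes : invCount (cornerOnes k) (rightOnes g) = 2 * k := by
  rw [invCount, card_filter_prod, Fin.sum_univ_two]
  simp only [cornerOnes, rightOnes, Fin.isValue, Matrix.cons_val_zero, Matrix.cons_val_one,
    Fin.lt_def, Fin.val_zero, Fin.val_last, Fin.val_succ]
  rw [filter_true_of_mem fun a _ => by omega,
    filter_false_of_mem fun a _ => by have := a.2; omega, card_univ, Fintype.card_fin, card_empty,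
    add_zero]

lemma invCount_acOnes (hk : 1 ≤ k) (hfib : ∀ w, #{a | g a = w} = 2) :
    invCount (acOnes g) (acOnes g) = k * (4 * k - 1) := by
  have hsame : 2 * #{ab : Fin (2 * k) × Fin (2 * k) | ab.1 < ab.2 ∧ g ab.1 ≠ g ab.2}
      = 2 * k * (2 * k - 2) := by
    rw [two_mul_card_filter_lt_and (fun a b => g a ≠ g b) (fun _ _ => ne_comm)
      (fun _ => not_ne_iff.mpr rfl), card_filter_apply_ne_apply g (fun a => hfib (g a)),
      Fintype.card_fin]
  have hcross : #{ab : Fin (2 * k) × Fin (2 * k) | ab.1 < ab.2} = k * (2 * k - 1) := by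
    rw [Fintype.card_product_filter_lt, Fintype.card_fin, Nat.choose_two_right, mul_assoc,
      Nat.mul_div_cancel_left _ two_pos]
  have hsplit : 4 * k - 1 = (2 * k - 2) + (2 * k - 1) + 2 := by omega
  have := invCount_leftOnes_add_invCount_rightOnes g
  have := invCount_rightOnes_add_invCount_cornerOnes_left g
  simp only [acOnes, invCount_sumElim_left, invCount_sumElim_right, invCount_leftOnes_rightOnes,
    invCount_cornerOnes_right, invCount_cornerOnes_rightOnes]
  rw [hsplit, Nat.mul_add, Nat.mul_add]
  rw [show 2 * k * (2 * k - 2) = 2 * (k * (2 * k - 2)) by ring] at hsame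
  omega

end ACInversions

section ACMatrix

variable {k : ℕ} {C : Matrix (Fin (2 * k)) (Fin k) ℕ} {g : Fin (2 * k) → Fin k}
  {A : Matrix (Fin (2 * k + 1)) (Fin (2 * k + 1)) ℕ}

lemma apply_castSucc_eq_of_topLeft (hg : ∀ i j, C i j = if j = g i then 1 else 0)
    (hTL : ∀ (a : Fin (2 * k)) (j : Fin (2 * k + 1)) (hj : (j : ℕ) < k),
      A a.castSucc j = C a ⟨j, hj⟩)
    (a : Fin (2 * k)) (j : Fin (2 * k + 1)) (hj : (j : ℕ) < k) :
    A a.castSucc j = if (j : ℕ) = g a then 1 else 0 := by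
  rw [hTL a j hj, hg]
  simp [Fin.ext_iff]

lemma apply_succ_eq_of_bottomRight (hg : ∀ i j, C i j = if j = g i then 1 else 0)
    (hBR : ∀ (a : Fin (2 * k)) (j : Fin (2 * k + 1)) (hj₁ : k ≤ (j : ℕ))
      (hj₂ : (j : ℕ) < 2 * k), A a.succ j = C a ⟨2 * k - 1 - j, by omega⟩)
    (a : Fin (2 * k)) (j : Fin (2 * k + 1)) (hj₁ : k ≤ (j : ℕ)) (hj₂ : (j : ℕ) < 2 * k) :
    A a.succ j = if (j : ℕ) = 2 * k - 1 - g a then 1 else 0 := by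
  rw [hBR a j hj₁ hj₂, hg]
  have := (g a).2
  simp only [Fin.ext_iff]
  split_ifs <;> omega

lemma eq_indicator_acOnes (hg : ∀ i j, C i j = if j = g i then 1 else 0)
    (hTL : ∀ (a : Fin (2 * k)) (j : Fin (2 * k + 1)) (hj : (j : ℕ) < k),
      A a.castSucc j = C a ⟨j, hj⟩)
    (hBR : ∀ (a : Fin (2 * k)) (j : Fin (2 * k + 1)) (hj₁ : k ≤ (j : ℕ))
      (hj₂ : (j : ℕ) < 2 * k), A a.succ j = C a ⟨2 * k - 1 - j, by omega⟩)
    (h1n : A 0 (Fin.last _) = 1) (hnn : A (Fin.last _) (Fin.last _) = 1)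
    (h0 : ∀ i j : Fin (2 * k + 1),
      ¬(i.1 < 2 * k ∧ j.1 < k) → ¬(1 ≤ i.1 ∧ k ≤ j.1 ∧ j.1 < 2 * k) →
      ¬(i.1 = 0 ∧ j.1 = 2 * k) → ¬(i.1 = 2 * k ∧ j.1 = 2 * k) → A i j = 0)
    (i j : Fin (2 * k + 1)) :
    A i j = if (i, j) ∈ Set.range (acOnes g) then 1 else 0 := by
  have hone : ∀ x, A (acOnes g x).1 (acOnes g x).2 = 1 := by
    rintro (a | a | e)
    · simp only [acOnes, Sum.elim_inl, leftOnes]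
      rw [apply_castSucc_eq_of_topLeft hg hTL a _ (by simp), if_pos (by simp)]
    · simp only [acOnes, Sum.elim_inr, Sum.elim_inl, rightOnes]
      have := (g a).2
      rw [apply_succ_eq_of_bottomRight hg hBR a _ (by simp; omega) (by simp; omega), if_pos rfl]
    · fin_cases e
      · exact h1n
      · exact hnn
  split_ifs with hmem
  · obtain ⟨x, hx⟩ := hmem
    simpa [hx] using hone x
  by_cases hTLij : (i : ℕ) < 2 * k ∧ (j : ℕ) < k
  · let a : Fin (2 * k) := ⟨i, hTLij.1⟩
    exact (apply_castSucc_eq_of_topLeft hg hTL a j hTLij.2).trans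
      (if_neg fun hj => hmem ⟨.inl a, Prod.ext rfl (Fin.ext hj.symm)⟩)
  by_cases hBRij : 1 ≤ (i : ℕ) ∧ k ≤ (j : ℕ) ∧ (j : ℕ) < 2 * k
  · let a : Fin (2 * k) := ⟨i - 1, by omega⟩
    have hi : a.succ = i := Fin.ext (by simp [a]; omega)
    have hA := apply_succ_eq_of_bottomRight hg hBR a j hBRij.2.1 hBRij.2.2
    rw [hi] at hA
    exact hA.trans (if_neg fun hj => hmem ⟨.inr (.inl a), Prod.ext hi (Fin.ext hj.symm)⟩)
  by_cases hc0 : (i : ℕ) = 0 ∧ (j : ℕ) = 2 * k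
  · exact absurd ⟨.inr (.inr 0), Prod.ext (Fin.ext hc0.1.symm) (Fin.ext hc0.2.symm)⟩ hmem
  by_cases hc1 : (i : ℕ) = 2 * k ∧ (j : ℕ) = 2 * k
  · exact absurd ⟨.inr (.inr 1), Prod.ext (Fin.ext hc1.1.symm) (Fin.ext hc1.2.symm)⟩ hmem
  exact h0 i j hTLij hBRij hc0 hc1

end ACMatrix

/-- Let `k ≥ 1`, `n = 2k+1`, and let `C` be a `2k × k`
(0,1)-matrix with all row sums `1` and all column sums `2`. If `A` is the
`n × n` matrix whose top-left `2k × k` block is `C`, whose block on rows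
`2,…,2k+1` and columns `k+1,…,2k` is the conjugate `C*`, whose `(1,n)`- and
`(n,n)`-entries are `1`, and all of whose other entries are `0`, then
`A ∈ A(n,2)` and `ν(A) = k(4k−1)`.  (Indices inside are 0-based.) -/
theorem ac_odd_construction (k : ℕ) (hk : 1 ≤ k)
    (C : Matrix (Fin (2*k)) (Fin k) ℕ) (hC : ZeroOne C)
    (hCrow : ∀ i, rowSum C i = 1) (hCcol : ∀ j, colSum C j = 2)
    (A : Matrix (Fin (2*k+1)) (Fin (2*k+1)) ℕ)
    (hTL : ∀ (i j : ℕ) (hi : i < 2*k) (hj : j < k),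
      A ⟨i, by omega⟩ ⟨j, by omega⟩ = C ⟨i, hi⟩ ⟨j, hj⟩)
    (hBR : ∀ (i j : ℕ) (hi : i < 2*k) (hj : j < k),
      A ⟨i+1, by omega⟩ ⟨k+j, by omega⟩ = C ⟨i, hi⟩ ⟨k-1-j, by omega⟩)
    (h1n : A ⟨0, by omega⟩ ⟨2*k, by omega⟩ = 1)
    (hnn : A ⟨2*k, by omega⟩ ⟨2*k, by omega⟩ = 1)
    (h0 : ∀ i j : Fin (2*k+1),
      ¬(i.1 < 2*k ∧ j.1 < k) → ¬(1 ≤ i.1 ∧ k ≤ j.1 ∧ j.1 < 2*k) →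
      ¬(i.1 = 0 ∧ j.1 = 2*k) → ¬(i.1 = 2*k ∧ j.1 = 2*k) → A i j = 0) :
    A ∈ classA (2*k+1) 2 ∧ nu A = k*(4*k-1) := by
  obtain ⟨g, hg⟩ := hC.exists_eq_ite_of_rowSum_eq_one hCrow
  have hfib : ∀ w, #{a | g a = w} = 2 := fun w =>
    (colSum_eq_card_of_eq_ite hg w).symm.trans (hCcol w)
  have hTL' : ∀ (a : Fin (2 * k)) (j : Fin (2 * k + 1)) (hj : (j : ℕ) < k),
      A a.castSucc j = C a ⟨j, hj⟩ := fun a j hj => hTL a j a.2 hj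
  have hBR' : ∀ (a : Fin (2 * k)) (j : Fin (2 * k + 1)) (hj₁ : k ≤ (j : ℕ))
      (hj₂ : (j : ℕ) < 2 * k), A a.succ j = C a ⟨2 * k - 1 - j, by omega⟩ := by
    intro a j hj₁ hj₂
    convert hBR a (j - k) a.2 (by omega) using 2 <;> ext <;> simp <;> omega
  have hA := eq_indicator_acOnes hg hTL' hBR' h1n hnn h0
  have hinj := acOnes_injective g hk
  refine ⟨mem_classA_of_eq_indicator hinj hA (card_acOnes_row g) (card_acOnes_col hfib), ?_⟩
  rw [nu_eq_invCount_of_eq_indicator hinj hA, invCount_acOnes g hk hfib]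
end
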